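/- arXiv:2407.18837 — 8 statements merged into one kernel-verified Lean document; each statement's English description precedes it below -/
import Mathlib

section
/- Completion-of-squares identity for the error transfer matrix: For all real matrices H ∈ ℝ^{q×p}, L ∈ ℝ^{r×p}, and K ∈ ℝ^{r×q}, with K° := L Hᵀ (I + H Hᵀ)⁻¹ and T_K := [K·H − L, K], one has T_K T_Kᵀ = (K − K°)(I + H Hᵀ)(K − K°)ᵀ + L(I + Hᵀ H)⁻¹ Lᵀ. In particular T_{K°} T_{K°}ᵀ = L(I + Hᵀ H)⁻¹ Lᵀ, T_K T_Kᵀ ⪰ T_{K°} T_{K°}ᵀ for every K, and equality holds if and only if K = K°. -/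
open Matrix

noncomputable section

/-- The error transfer matrix `T_K = [K·H − L, K]`. -/
def TK {p q r : ℕ} (H : Matrix (Fin q) (Fin p) ℝ) (L : Matrix (Fin r) (Fin p) ℝ)
    (K : Matrix (Fin r) (Fin q) ℝ) : Matrix (Fin r) (Fin p ⊕ Fin q) ℝ :=
  Matrix.fromCols (K * H - L) K

/-- The nominal noncausal filter `K° = L Hᵀ (I + H Hᵀ)⁻¹`. -/
def Knom {p q r : ℕ} (H : Matrix (Fin q) (Fin p) ℝ) (L : Matrix (Fin r) (Fin p) ℝ) :
    Matrix (Fin r) (Fin q) ℝ :=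
  L * Hᵀ * (1 + H * Hᵀ)⁻¹

/-! With `A = 1 + H Hᵀ` one has `K° A = L Hᵀ`, so `T_K T_Kᵀ = (K H − L)(K H − L)ᵀ + K Kᵀ
= K A Kᵀ − K H Lᵀ − L Hᵀ Kᵀ + L Lᵀ`, and completing the square around `K°` leaves
`L (1 − Hᵀ A⁻¹ H) Lᵀ`, which is `L (1 + Hᵀ H)⁻¹ Lᵀ` by the Woodbury identity. As `A` is positive
definite, the square `(K − K°) A (K − K°)ᵀ` is positive semidefinite and vanishes only at `K = K°`. -/

namespace Matrix

variable {m n R : Type*}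

theorem PosDef.eq_zero_of_mul_mul_conjTranspose_eq_zero [Fintype m] [Fintype n] [Ring R]
    [PartialOrder R] [StarRing R] {A : Matrix n n R} (hA : A.PosDef) {N : Matrix m n R}
    (h : N * A * Nᴴ = 0) : N = 0 := by
  suffices Nᴴ = 0 from conjTranspose_eq_zero.1 this
  refine ext_iff_mulVec.2 fun x => ?_
  by_contra hx
  have hquad : star (Nᴴ *ᵥ x) ⬝ᵥ (A *ᵥ (Nᴴ *ᵥ x)) = star x ⬝ᵥ ((N * A * Nᴴ) *ᵥ x) := by
    rw [star_mulVec, conjTranspose_conjTranspose, ← dotProduct_mulVec, mulVec_mulVec,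
      mulVec_mulVec, Matrix.mul_assoc]
  have hpos := hA.dotProduct_mulVec_pos (x := Nᴴ *ᵥ x) (by simpa using hx)
  rw [hquad, h, zero_mulVec, dotProduct_zero] at hpos
  exact lt_irrefl 0 hpos

theorem transpose_one_add_mul_transpose [DecidableEq m] [Fintype n] [CommRing R]
    (H : Matrix m n R) : (1 + H * Hᵀ)ᵀ = 1 + H * Hᵀ := by
  rw [transpose_add, transpose_one, transpose_mul, transpose_transpose]

theorem sub_mul_mul_transpose_sub [Fintype n] [CommRing R] {A : Matrix n n R} (hA : Aᵀ = A)
    (K K₀ : Matrix m n R) :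
    (K - K₀) * A * (K - K₀)ᵀ
      = K * A * Kᵀ - K * (K₀ * A)ᵀ - K₀ * A * Kᵀ + K₀ * A * K₀ᵀ := by
  simp only [transpose_sub, transpose_mul, hA, Matrix.sub_mul, Matrix.mul_sub, Matrix.mul_assoc]
  abel

variable [Fintype m] [Fintype n] [DecidableEq m]

theorem posDef_one_add_mul_transpose (H : Matrix m n ℝ) : (1 + H * Hᵀ).PosDef :=
  PosDef.one.add_posSemidef (posSemidef_self_mul_conjTranspose H)

theorem inv_one_add_transpose_mul [DecidableEq n] (H : Matrix m n ℝ) :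
    (1 + Hᵀ * H)⁻¹ = 1 - Hᵀ * (1 + H * Hᵀ)⁻¹ * H := by
  simpa using add_mul_mul_inv_eq_sub (1 : Matrix n n ℝ) Hᵀ 1 H isUnit_one isUnit_one
    (by simpa using (posDef_one_add_mul_transpose H).isUnit)

end Matrix

section ErrorTransfer

variable {p q r : ℕ} (H : Matrix (Fin q) (Fin p) ℝ) (L : Matrix (Fin r) (Fin p) ℝ)

theorem TK_mul_transpose (K : Matrix (Fin r) (Fin q) ℝ) :
    TK H L K * (TK H L K)ᵀ = (K * H - L) * (K * H - L)ᵀ + K * Kᵀ := by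
  rw [TK, transpose_fromCols, fromCols_mul_fromRows]

theorem Knom_mul_one_add_mul_transpose : Knom H L * (1 + H * Hᵀ) = L * Hᵀ := by
  rw [Knom, Matrix.mul_assoc, nonsing_inv_mul _
    ((isUnit_iff_isUnit_det _).1 (posDef_one_add_mul_transpose H).isUnit), Matrix.mul_one]

theorem Knom_mul_one_add_mul_transpose_mul_transpose :
    Knom H L * (1 + H * Hᵀ) * (Knom H L)ᵀ = L * (Hᵀ * (1 + H * Hᵀ)⁻¹ * H) * Lᵀ := by
  rw [Knom_mul_one_add_mul_transpose, Knom, transpose_mul, transpose_mul, transpose_nonsing_inv,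
    transpose_one_add_mul_transpose, transpose_transpose]
  simp only [Matrix.mul_assoc]

theorem TK_mul_transpose_eq (K : Matrix (Fin r) (Fin q) ℝ) :
    TK H L K * (TK H L K)ᵀ
      = (K - Knom H L) * (1 + H * Hᵀ) * (K - Knom H L)ᵀ + L * (1 + Hᵀ * H)⁻¹ * Lᵀ := by
  rw [TK_mul_transpose, sub_mul_mul_transpose_sub (transpose_one_add_mul_transpose H),
    Knom_mul_one_add_mul_transpose_mul_transpose, Knom_mul_one_add_mul_transpose,
    inv_one_add_transpose_mul]
  simp only [transpose_sub, transpose_mul, transpose_transpose, Matrix.sub_mul, Matrix.mul_sub,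
    Matrix.add_mul, Matrix.mul_add, Matrix.mul_one, Matrix.mul_assoc]
  abel

end ErrorTransfer

/-- Completion-of-squares identity for the error transfer matrix. -/
theorem stmt_2 {p q r : ℕ} (H : Matrix (Fin q) (Fin p) ℝ) (L : Matrix (Fin r) (Fin p) ℝ)
    (K : Matrix (Fin r) (Fin q) ℝ) :
    TK H L K * (TK H L K)ᵀ
        = (K - Knom H L) * (1 + H * Hᵀ) * (K - Knom H L)ᵀ + L * (1 + Hᵀ * H)⁻¹ * Lᵀ ∧
      TK H L (Knom H L) * (TK H L (Knom H L))ᵀ = L * (1 + Hᵀ * H)⁻¹ * Lᵀ ∧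
      (TK H L K * (TK H L K)ᵀ - TK H L (Knom H L) * (TK H L (Knom H L))ᵀ).PosSemidef ∧
      (TK H L K * (TK H L K)ᵀ = TK H L (Knom H L) * (TK H L (Knom H L))ᵀ ↔ K = Knom H L) := by
  have hA := posDef_one_add_mul_transpose H
  have hopt : TK H L (Knom H L) * (TK H L (Knom H L))ᵀ = L * (1 + Hᵀ * H)⁻¹ * Lᵀ := by
    simpa using TK_mul_transpose_eq H L (Knom H L)
  have hgap : TK H L K * (TK H L K)ᵀ - TK H L (Knom H L) * (TK H L (Knom H L))ᵀ
      = (K - Knom H L) * (1 + H * Hᵀ) * (K - Knom H L)ᵀ := by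
    rw [TK_mul_transpose_eq, hopt, add_sub_cancel_right]
  refine ⟨TK_mul_transpose_eq H L K, hopt, hgap ▸ hA.posSemidef.mul_mul_conjTranspose_same _, ?_⟩
  rw [← sub_eq_zero, hgap, ← sub_eq_zero (a := K)]
  exact ⟨hA.eq_zero_of_mul_mul_conjTranspose_eq_zero, fun h => by rw [h]; simp⟩

end
end

section
/- Strong duality for the Wasserstein-2 worst-case quadratic objective (finite horizon): Let T ∈ ℝ^{r×d} be a nonzero matrix, let the nominal P° on ℝ^d have zero mean, finite second moment, and identity covariance, and let ρ > 0. Then sup{ ∫‖Tξ‖² dP(ξ) : P in the W₂-ball of radius ρ around P° } is finite and equals inf{ γρ² + γ·Tr[(I − γ⁻¹ T Tᵀ)⁻¹ − I] : γ ∈ ℝ, γ > ‖T‖_op² } (the condition γ > ‖T‖_op² being equivalent to γI − T Tᵀ ≻ 0). -/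
/-!
Weak duality holds pointwise: if `S = γ - TᵀT ≻ 0`, completing the square gives
`‖Tx‖² ≤ γ ‖x - y‖² + γ yᵀ TᵀT S⁻¹ y` for all `x, y`. Integrating against a coupling of cost
at most `ρ²` and using `E[yyᵀ] = I` under `P°` bounds every primal value by
`γρ² + γ Tr(TᵀT S⁻¹)`, which the push-through identity `(1 - γ⁻¹TTᵀ)⁻¹ = 1 + T S⁻¹ Tᵀ` turns
into the dual objective.

In an eigenbasis `TᵀT = U diag(λ) Uᵀ` the dual objective reads `γρ² + γ ∑ λᵢ / (γ - λᵢ)`.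
The intermediate value theorem gives `γ* > λ_max` with `∑ (λᵢ / (γ* - λᵢ))² = ρ²`; the
pushforward of `P°` under `L = γ* (γ* - TᵀT)⁻¹` then has transport cost exactly `ρ²` and
attains the dual objective at `γ*`. So both bounds meet, and `λ_max = ‖T‖²_op`.
-/

open Matrix MeasureTheory

noncomputable section

/-- Squared Euclidean norm of a finitely-indexed real vector. -/
def sqNorm {ι : Type*} [Fintype ι] (x : ι → ℝ) : ℝ := ∑ i, (x i) ^ 2

/-- `P` lies in the `W₂`-ball of radius `ρ` around `P0`: `P` is a probability measure
with finite second moment and there is a coupling of `P` and `P0` of cost at most `ρ²`. -/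
def MemW2Ball {ι : Type*} [Fintype ι] (P P0 : Measure (ι → ℝ)) (ρ : ℝ) : Prop :=
  IsProbabilityMeasure P ∧
  (∫⁻ ξ, ENNReal.ofReal (sqNorm ξ) ∂P) < ⊤ ∧
  ∃ μ : Measure ((ι → ℝ) × (ι → ℝ)), IsProbabilityMeasure μ ∧
    μ.map Prod.fst = P ∧ μ.map Prod.snd = P0 ∧
    (∫⁻ xy, ENNReal.ofReal (sqNorm fun i => xy.1 i - xy.2 i) ∂μ) ≤ ENNReal.ofReal (ρ ^ 2)

/-- The nominal distribution: a probability measure with finite second moment,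
zero mean, and identity covariance. -/
def IsNominal {ι : Type*} [Fintype ι] [DecidableEq ι] (P0 : Measure (ι → ℝ)) : Prop :=
  IsProbabilityMeasure P0 ∧ Integrable (fun ξ => sqNorm ξ) P0 ∧
  (∀ i, (∫ ξ, ξ i ∂P0) = 0) ∧
  (∀ i j, (∫ ξ, ξ i * ξ j ∂P0) = if i = j then (1 : ℝ) else 0)

/-- The set of worst-case mean-squared-error values `∫‖Tξ‖² dP` for `P` ranging over
the `W₂`-ball of radius `ρ` around `P0`. -/
def wcSet {ι : Type*} [Fintype ι] {r : ℕ} (T : Matrix (Fin r) ι ℝ)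
    (P0 : Measure (ι → ℝ)) (ρ : ℝ) : Set ℝ :=
  {e | ∃ P, MemW2Ball P P0 ρ ∧ e = ∫ ξ, sqNorm (T.mulVec ξ) ∂P}

/-- The squared operator (spectral) norm of a real matrix `T`, characterized as the least
`c ≥ 0` with `c·I − TᵀT ⪰ 0`. -/
def opNormSq {r d : ℕ} (T : Matrix (Fin r) (Fin d) ℝ) : ℝ :=
  sInf {c : ℝ | 0 ≤ c ∧ (c • (1 : Matrix (Fin d) (Fin d) ℝ) - Tᵀ * T).PosSemidef}

section SqNorm

variable {m ι : Type*} [Fintype m] [Fintype ι]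

lemma sqNorm_eq_dotProduct (x : ι → ℝ) : sqNorm x = x ⬝ᵥ x := by
  simp [sqNorm, dotProduct, pow_two]

lemma sqNorm_nonneg (x : ι → ℝ) : 0 ≤ sqNorm x :=
  Finset.sum_nonneg fun i _ => sq_nonneg (x i)

lemma sq_apply_le_sqNorm (x : ι → ℝ) (i : ι) : x i ^ 2 ≤ sqNorm x :=
  Finset.single_le_sum (f := fun j => x j ^ 2) (fun j _ => sq_nonneg (x j)) (Finset.mem_univ i)

@[fun_prop]
lemma continuous_sqNorm : Continuous (sqNorm : (ι → ℝ) → ℝ) := by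
  unfold sqNorm
  fun_prop

lemma sqNorm_mulVec (M : Matrix m ι ℝ) (x : ι → ℝ) :
    sqNorm (M *ᵥ x) = x ⬝ᵥ (Mᵀ * M) *ᵥ x := by
  rw [sqNorm_eq_dotProduct, ← mulVec_mulVec, dotProduct_mulVec x Mᵀ, vecMul_transpose]

end SqNorm

lemma dotProduct_mulVec_eq_sum {ι R : Type*} [Fintype ι] [CommSemiring R] (M : Matrix ι ι R)
    (x : ι → R) : x ⬝ᵥ M *ᵥ x = ∑ i, ∑ j, M i j * (x i * x j) := by
  simp only [dotProduct, mulVec, Finset.mul_sum]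
  exact Finset.sum_congr rfl fun i _ => Finset.sum_congr rfl fun j _ => by ring

namespace IsNominal

variable {ι : Type*} [Fintype ι] [DecidableEq ι] {P0 : Measure (ι → ℝ)}

lemma memLp_two_apply (hP0 : IsNominal P0) (i : ι) : MemLp (fun y => y i) 2 P0 := by
  refine (memLp_two_iff_integrable_sq (continuous_apply i).aestronglyMeasurable).2
    (hP0.2.1.mono' ((continuous_apply i).pow 2).aestronglyMeasurable ?_)
  exact Filter.Eventually.of_forall fun y => by
    simpa [abs_of_nonneg (sq_nonneg (y i))] using sq_apply_le_sqNorm y i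

lemma integrable_dotProduct_mulVec (hP0 : IsNominal P0) (M : Matrix ι ι ℝ) :
    Integrable (fun y => y ⬝ᵥ M *ᵥ y) P0 := by
  simp_rw [dotProduct_mulVec_eq_sum]
  exact integrable_finsetSum _ fun i _ => integrable_finsetSum _ fun j _ =>
    ((hP0.memLp_two_apply i).integrable_mul (hP0.memLp_two_apply j)).const_mul _

lemma integral_dotProduct_mulVec (hP0 : IsNominal P0) (M : Matrix ι ι ℝ) :
    ∫ y, y ⬝ᵥ M *ᵥ y ∂P0 = M.trace := by
  have hint (i j : ι) : Integrable (fun y : ι → ℝ => M i j * (y i * y j)) P0 :=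
    ((hP0.memLp_two_apply i).integrable_mul (hP0.memLp_two_apply j)).const_mul _
  simp_rw [dotProduct_mulVec_eq_sum]
  rw [integral_finsetSum _ fun i _ => integrable_finsetSum _ fun j _ => hint i j]
  simp_rw [integral_finsetSum _ fun j _ => hint _ j, integral_const_mul, hP0.2.2.2]
  simp [Matrix.trace]

lemma lintegral_sqNorm_mulVec {m : Type*} [Fintype m] (hP0 : IsNominal P0)
    (M : Matrix m ι ℝ) :
    ∫⁻ y, ENNReal.ofReal (sqNorm (M *ᵥ y)) ∂P0 = ENNReal.ofReal (Mᵀ * M).trace := by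
  simp_rw [sqNorm_mulVec]
  rw [← hP0.integral_dotProduct_mulVec, ofReal_integral_eq_lintegral_ofReal
    (hP0.integrable_dotProduct_mulVec _)]
  exact ae_of_all _ fun y => by simpa [sqNorm_mulVec] using sqNorm_nonneg (M *ᵥ y)

lemma map_mulVec_memW2Ball (hP0 : IsNominal P0) (L : Matrix ι ι ℝ) {ρ : ℝ}
    (hcost : ((L - 1)ᵀ * (L - 1)).trace ≤ ρ ^ 2) : MemW2Ball (P0.map (L *ᵥ ·)) P0 ρ := by
  have : IsProbabilityMeasure P0 := hP0.1
  have hL : Measurable (L *ᵥ · : (ι → ℝ) → ι → ℝ) :=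
    (by fun_prop : Continuous (L *ᵥ ·)).measurable
  have hpair : Measurable fun y => (L *ᵥ y, y) := hL.prodMk measurable_id
  refine ⟨Measure.isProbabilityMeasure_map hL.aemeasurable, ?_, P0.map fun y => (L *ᵥ y, y),
    Measure.isProbabilityMeasure_map hpair.aemeasurable, ?_, ?_, ?_⟩
  · rw [lintegral_map (by fun_prop) hL, hP0.lintegral_sqNorm_mulVec]
    exact ENNReal.ofReal_lt_top
  · rw [Measure.map_map measurable_fst hpair]
    rfl
  · rw [Measure.map_map measurable_snd hpair]
    exact Measure.map_id
  · rw [lintegral_map (by fun_prop) hpair]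
    have hsub (y : ι → ℝ) : (fun i => (L *ᵥ y) i - y i) = (L - 1) *ᵥ y := by
      rw [sub_mulVec, one_mulVec]
      rfl
    simp_rw [hsub, hP0.lintegral_sqNorm_mulVec]
    exact ENNReal.ofReal_le_ofReal hcost

lemma integral_sqNorm_mulVec_map_mulVec {m : Type*} [Fintype m] (hP0 : IsNominal P0)
    (T : Matrix m ι ℝ) (L : Matrix ι ι ℝ) :
    ∫ ξ, sqNorm (T *ᵥ ξ) ∂(P0.map (L *ᵥ ·)) = ((T * L)ᵀ * (T * L)).trace := by
  rw [integral_map (by fun_prop : Continuous (L *ᵥ ·)).aemeasurable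
    (by fun_prop : Continuous fun ξ => sqNorm (T *ᵥ ξ)).aestronglyMeasurable]
  simp_rw [mulVec_mulVec, sqNorm_mulVec, hP0.integral_dotProduct_mulVec]

lemma trace_mem_wcSet (hP0 : IsNominal P0) {r : ℕ} (T : Matrix (Fin r) ι ℝ) {ρ : ℝ}
    (L : Matrix ι ι ℝ) (hcost : ((L - 1)ᵀ * (L - 1)).trace ≤ ρ ^ 2) :
    ((T * L)ᵀ * (T * L)).trace ∈ wcSet T P0 ρ :=
  ⟨_, hP0.map_mulVec_memW2Ball L hcost, (hP0.integral_sqNorm_mulVec_map_mulVec T L).symm⟩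

end IsNominal

lemma integrable_and_integral_le_of_lintegral_ofReal_le {α : Type*} [MeasurableSpace α]
    {μ : Measure α} {f : α → ℝ} (hf : 0 ≤ᵐ[μ] f) (hfm : AEStronglyMeasurable f μ) {c : ℝ}
    (hc : 0 ≤ c) (h : ∫⁻ a, ENNReal.ofReal (f a) ∂μ ≤ ENNReal.ofReal c) :
    Integrable f μ ∧ ∫ a, f a ∂μ ≤ c := by
  refine ⟨⟨hfm, (hasFiniteIntegral_iff_ofReal hf).2 (h.trans_lt ENNReal.ofReal_lt_top)⟩, ?_⟩
  rw [integral_eq_lintegral_of_nonneg_ae hf hfm]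
  exact ENNReal.toReal_le_of_le_ofReal hc h

section WeakDuality

variable {m ι : Type*} [Fintype m] [Fintype ι] [DecidableEq ι]

lemma sqNorm_mulVec_le_of_posDef (T : Matrix m ι ℝ) {γ : ℝ} (hS : (γ • 1 - Tᵀ * T).PosDef)
    (x y : ι → ℝ) :
    sqNorm (T *ᵥ x) ≤ γ * sqNorm (x - y) + γ * (y ⬝ᵥ (Tᵀ * T * (γ • 1 - Tᵀ * T)⁻¹) *ᵥ y) := by
  set S := γ • 1 - Tᵀ * T with hSdef
  have hTT : Tᵀ * T = γ • 1 - S := by rw [hSdef, sub_sub_cancel]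
  have hSt : Sᵀ = S := by simp [hSdef, transpose_sub, transpose_mul]
  have hSB : S * S⁻¹ = 1 := mul_nonsing_inv S ((isUnit_iff_isUnit_det S).1 hS.isUnit)
  set u := S⁻¹ *ᵥ y
  have hSu : S *ᵥ u = y := by rw [mulVec_mulVec, hSB, one_mulVec]
  have hu_S (v : ι → ℝ) : u ⬝ᵥ S *ᵥ v = y ⬝ᵥ v := by
    rw [dotProduct_mulVec, ← mulVec_transpose, hSt, hSu]
  -- completing the square: the gap between the two sides is the `S`-form at `x - γ S⁻¹ y`
  have hsq : 0 ≤ (x - γ • u) ⬝ᵥ S *ᵥ (x - γ • u) := by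
    simpa using hS.posSemidef.dotProduct_mulVec_nonneg (x - γ • u)
  have hexp : (x - γ • u) ⬝ᵥ S *ᵥ (x - γ • u)
      = x ⬝ᵥ S *ᵥ x - 2 * γ * (x ⬝ᵥ y) + γ ^ 2 * (y ⬝ᵥ u) := by
    simp only [mulVec_sub, mulVec_smul, hSu, sub_dotProduct, dotProduct_sub, smul_dotProduct,
      dotProduct_smul, hu_S, smul_eq_mul, dotProduct_comm u y, dotProduct_comm y x]
    ring
  have hlhs : sqNorm (T *ᵥ x) = γ * (x ⬝ᵥ x) - x ⬝ᵥ S *ᵥ x := by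
    simp only [sqNorm_mulVec, hTT, sub_mulVec, smul_mulVec, one_mulVec, dotProduct_sub,
      dotProduct_smul, smul_eq_mul]
  have hdual : y ⬝ᵥ (Tᵀ * T * S⁻¹) *ᵥ y = γ * (y ⬝ᵥ u) - y ⬝ᵥ y := by
    simp only [hTT, sub_mul, hSB, smul_mul, one_mul, sub_mulVec, smul_mulVec, one_mulVec,
      dotProduct_sub, dotProduct_smul, smul_eq_mul, u]
  rw [hexp] at hsq
  rw [hlhs, hdual, sqNorm_eq_dotProduct]
  simp only [sub_dotProduct, dotProduct_sub, dotProduct_comm y x]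
  linear_combination hsq

lemma integral_sqNorm_mulVec_le_of_memW2Ball {P P0 : Measure (ι → ℝ)} (hP0 : IsNominal P0)
    {ρ : ℝ} (hP : MemW2Ball P P0 ρ) (T : Matrix m ι ℝ) {γ : ℝ} (hγ : 0 ≤ γ)
    (hS : (γ • 1 - Tᵀ * T).PosDef) :
    ∫ ξ, sqNorm (T *ᵥ ξ) ∂P ≤ γ * ρ ^ 2 + γ * (Tᵀ * T * (γ • 1 - Tᵀ * T)⁻¹).trace := by
  obtain ⟨-, -, μ, -, hfst, hsnd, hcost⟩ := hP
  set M := Tᵀ * T * (γ • 1 - Tᵀ * T)⁻¹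
  obtain ⟨hcost_int, hcost_le⟩ := integrable_and_integral_le_of_lintegral_ofReal_le
    (f := fun w : (ι → ℝ) × (ι → ℝ) => sqNorm (w.1 - w.2)) (ae_of_all _ fun w => sqNorm_nonneg _)
    (continuous_sqNorm.comp (continuous_fst.sub continuous_snd)).aestronglyMeasurable
    (sq_nonneg ρ) hcost
  have hquad_meas : AEStronglyMeasurable (fun y : ι → ℝ => y ⬝ᵥ M *ᵥ y) (μ.map Prod.snd) := by
    rw [hsnd]
    exact (hP0.integrable_dotProduct_mulVec M).1
  have hquad_int : Integrable (fun w : (ι → ℝ) × (ι → ℝ) => w.2 ⬝ᵥ M *ᵥ w.2) μ :=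
    (integrable_map_measure hquad_meas measurable_snd.aemeasurable).1
      (hsnd ▸ hP0.integrable_dotProduct_mulVec M)
  have hquad : ∫ w, w.2 ⬝ᵥ M *ᵥ w.2 ∂μ = M.trace := by
    rw [← integral_map measurable_snd.aemeasurable hquad_meas, hsnd,
      hP0.integral_dotProduct_mulVec]
  calc ∫ ξ, sqNorm (T *ᵥ ξ) ∂P = ∫ w, sqNorm (T *ᵥ w.1) ∂μ := by
        rw [← hfst, integral_map measurable_fst.aemeasurable
          (by fun_prop : Continuous fun ξ => sqNorm (T *ᵥ ξ)).aestronglyMeasurable]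
    _ ≤ ∫ w, (γ * sqNorm (w.1 - w.2) + γ * (w.2 ⬝ᵥ M *ᵥ w.2)) ∂μ :=
        integral_mono_of_nonneg (ae_of_all _ fun w => sqNorm_nonneg _)
          ((hcost_int.const_mul γ).add (hquad_int.const_mul γ))
          (ae_of_all _ fun w => sqNorm_mulVec_le_of_posDef T hS w.1 w.2)
    _ = γ * ∫ w, sqNorm (w.1 - w.2) ∂μ + γ * M.trace := by
        rw [integral_add (hcost_int.const_mul γ) (hquad_int.const_mul γ), integral_const_mul,
          integral_const_mul, hquad]
    _ ≤ γ * ρ ^ 2 + γ * M.trace := by gcongr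

end WeakDuality

lemma inv_one_sub_smul_mul_transpose {m n K : Type*} [Fintype m] [Fintype n] [DecidableEq m]
    [DecidableEq n] [Field K] (T : Matrix m n K) {γ : K} (hγ : γ ≠ 0)
    (hS : IsUnit (γ • 1 - Tᵀ * T).det) :
    (1 - γ⁻¹ • (T * Tᵀ))⁻¹ = 1 + T * (γ • 1 - Tᵀ * T)⁻¹ * Tᵀ := by
  set B := (γ • 1 - Tᵀ * T)⁻¹
  have hAB : Tᵀ * T * B = γ • B - 1 := by
    have h := mul_nonsing_inv _ hS
    rw [sub_mul, smul_mul, one_mul] at h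
    rw [← h, sub_sub_cancel]
  apply inv_eq_right_inv
  calc (1 - γ⁻¹ • (T * Tᵀ)) * (1 + T * B * Tᵀ)
      = 1 + T * B * Tᵀ - γ⁻¹ • (T * Tᵀ) - γ⁻¹ • (T * (Tᵀ * T * B) * Tᵀ) := by
        simp only [sub_mul, mul_add, one_mul, mul_one, smul_mul, Matrix.mul_assoc]
        abel
    _ = 1 := by
        rw [hAB, Matrix.mul_sub, Matrix.sub_mul, Matrix.mul_smul, Matrix.smul_mul, Matrix.mul_one,
          smul_sub, smul_smul, inv_mul_cancel₀ hγ, one_smul]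
        abel

lemma trace_inv_one_sub_smul_mul_transpose_sub_one {m n K : Type*} [Fintype m] [Fintype n]
    [DecidableEq m] [DecidableEq n] [Field K] (T : Matrix m n K) {γ : K} (hγ : γ ≠ 0)
    (hS : IsUnit (γ • 1 - Tᵀ * T).det) :
    ((1 - γ⁻¹ • (T * Tᵀ))⁻¹ - 1).trace = (Tᵀ * T * (γ • 1 - Tᵀ * T)⁻¹).trace := by
  rw [inv_one_sub_smul_mul_transpose T hγ hS, add_sub_cancel_left, trace_mul_cycle,
    Matrix.mul_assoc]

namespace Matrix.IsHermitian

variable {n : Type*} [Fintype n] [DecidableEq n] {A : Matrix n n ℝ} (hA : A.IsHermitian)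

def conjDiagonal (f : n → ℝ) : Matrix n n ℝ :=
  Unitary.conjStarAlgAut ℝ _ hA.eigenvectorUnitary (diagonal f)

lemma conjDiagonal_eigenvalues : hA.conjDiagonal hA.eigenvalues = A := by
  conv_rhs => rw [hA.spectral_theorem]
  rfl

lemma conjDiagonal_const (c : ℝ) : hA.conjDiagonal (fun _ => c) = c • 1 := by
  rw [conjDiagonal, ← smul_one_eq_diagonal, map_smul, map_one]

lemma conjDiagonal_mul (f g : n → ℝ) :
    hA.conjDiagonal f * hA.conjDiagonal g = hA.conjDiagonal fun i => f i * g i := by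
  rw [conjDiagonal, conjDiagonal, ← map_mul, diagonal_mul_diagonal, conjDiagonal]

lemma conjDiagonal_sub (f g : n → ℝ) :
    hA.conjDiagonal f - hA.conjDiagonal g = hA.conjDiagonal fun i => f i - g i := by
  rw [conjDiagonal, conjDiagonal, ← map_sub, diagonal_sub, conjDiagonal]

lemma transpose_conjDiagonal (f : n → ℝ) : (hA.conjDiagonal f)ᵀ = hA.conjDiagonal f := by
  rw [← conjTranspose_eq_transpose_of_trivial, ← star_eq_conjTranspose, conjDiagonal, ← map_star,
    star_eq_conjTranspose, diagonal_conjTranspose, star_trivial]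

lemma trace_conjDiagonal (f : n → ℝ) : (hA.conjDiagonal f).trace = ∑ i, f i := by
  rw [conjDiagonal, Unitary.conjStarAlgAut_apply, trace_mul_cycle, Unitary.coe_star_mul_self,
    one_mul, trace_diagonal]

lemma posSemidef_conjDiagonal_iff (f : n → ℝ) :
    (hA.conjDiagonal f).PosSemidef ↔ ∀ i, 0 ≤ f i := by
  rw [conjDiagonal, Unitary.conjStarAlgAut_apply,
    Unitary.isUnit_coe.posSemidef_star_right_conjugate_iff, posSemidef_diagonal_iff]

lemma posDef_conjDiagonal_iff (f : n → ℝ) : (hA.conjDiagonal f).PosDef ↔ ∀ i, 0 < f i := by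
  rw [conjDiagonal, Unitary.conjStarAlgAut_apply,
    IsUnit.posDef_star_right_conjugate_iff Unitary.isUnit_coe, posDef_diagonal_iff]

lemma inv_conjDiagonal {f : n → ℝ} (hf : ∀ i, f i ≠ 0) :
    (hA.conjDiagonal f)⁻¹ = hA.conjDiagonal fun i => (f i)⁻¹ := by
  refine inv_eq_right_inv ?_
  simp_rw [conjDiagonal_mul, mul_inv_cancel₀ (hf _), conjDiagonal_const, one_smul]

lemma smul_one_sub_eq_conjDiagonal (c : ℝ) :
    c • 1 - A = hA.conjDiagonal fun i => c - hA.eigenvalues i := by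
  rw [← conjDiagonal_const, ← conjDiagonal_sub, conjDiagonal_eigenvalues]

lemma posSemidef_smul_one_sub_iff (c : ℝ) :
    (c • 1 - A).PosSemidef ↔ ∀ i, hA.eigenvalues i ≤ c := by
  simp_rw [hA.smul_one_sub_eq_conjDiagonal, posSemidef_conjDiagonal_iff, sub_nonneg]

lemma posDef_smul_one_sub_iff (c : ℝ) : (c • 1 - A).PosDef ↔ ∀ i, hA.eigenvalues i < c := by
  simp_rw [hA.smul_one_sub_eq_conjDiagonal, posDef_conjDiagonal_iff, sub_pos]

lemma trace_mul_inv_smul_one_sub {γ : ℝ} (hγ : ∀ i, hA.eigenvalues i < γ) :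
    (A * (γ • 1 - A)⁻¹).trace = ∑ i, hA.eigenvalues i / (γ - hA.eigenvalues i) := by
  rw [hA.smul_one_sub_eq_conjDiagonal, hA.inv_conjDiagonal fun i => (sub_pos.2 (hγ i)).ne']
  nth_rw 1 [← hA.conjDiagonal_eigenvalues]
  rw [conjDiagonal_mul, trace_conjDiagonal]
  rfl

end Matrix.IsHermitian

lemma exists_sum_sq_div_sub_eq {n : Type*} [Fintype n] {e : n → ℝ} {i₀ : n}
    (he : ∀ i, 0 ≤ e i) (hmax : ∀ i, e i ≤ e i₀) (hpos : 0 < e i₀) {ρ : ℝ} (hρ : 0 < ρ) :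
    ∃ γ, e i₀ < γ ∧ ∑ i, (e i / (γ - e i)) ^ 2 = ρ ^ 2 := by
  set f : ℝ → ℝ := fun γ => ∑ i, (e i / (γ - e i)) ^ 2
  set N : ℝ := (Fintype.card n : ℝ)
  have hN : 1 ≤ N := Nat.one_le_cast.2 (Fintype.card_pos_iff.2 ⟨i₀⟩)
  have hterm_le {γ : ℝ} (hγ : e i₀ < γ) (i : n) : e i / (γ - e i) ≤ e i₀ / (γ - e i₀) :=
    div_le_div₀ hpos.le (hmax i) (sub_pos.2 hγ) (by linarith [hmax i])
  -- at `γ₁` the term of `i₀` alone is `ρ`; at `γ₂` every term is at most `ρ / N`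
  set γ₁ := e i₀ + e i₀ / ρ
  set γ₂ := e i₀ + N * e i₀ / ρ
  have hγ₁ : e i₀ < γ₁ := by simp only [γ₁]; linarith [div_pos hpos hρ]
  have hγ₁₂ : γ₁ ≤ γ₂ := by
    simp only [γ₁, γ₂, mul_div_assoc]
    nlinarith [div_pos hpos hρ]
  have hf₁ : ρ ^ 2 ≤ f γ₁ := by
    have h : e i₀ / (γ₁ - e i₀) = ρ := by
      simp only [γ₁, add_sub_cancel_left]
      field_simp
    calc ρ ^ 2 = (e i₀ / (γ₁ - e i₀)) ^ 2 := by rw [h]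
      _ ≤ f γ₁ := Finset.single_le_sum (f := fun i => (e i / (γ₁ - e i)) ^ 2)
          (fun i _ => sq_nonneg _) (Finset.mem_univ i₀)
  have hf₂ : f γ₂ ≤ ρ ^ 2 := by
    have h : e i₀ / (γ₂ - e i₀) = ρ / N := by
      simp only [γ₂, add_sub_cancel_left]
      field_simp
    calc f γ₂ ≤ ∑ _i : n, (ρ / N) ^ 2 := Finset.sum_le_sum fun i _ => by
          rw [← h]
          exact pow_le_pow_left₀ (div_nonneg (he i) (by linarith [hmax i]))
            (hterm_le (hγ₁.trans_le hγ₁₂) i) 2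
      _ = ρ ^ 2 / N := by
          rw [Finset.sum_const, Finset.card_univ, nsmul_eq_mul]
          field_simp
          rfl
      _ ≤ ρ ^ 2 := div_le_self (sq_nonneg ρ) hN
  have hcont : ContinuousOn f (Set.Icc γ₁ γ₂) := by
    refine continuousOn_finsetSum _ fun i _ => ((continuousOn_const.div
      (continuousOn_id.sub continuousOn_const) fun γ hγ => ?_).pow 2)
    have : e i < γ := by linarith [hmax i, hγ.1]
    simpa [sub_eq_zero] using this.ne'
  obtain ⟨γ, hγ, hfγ⟩ := intermediate_value_Icc' hγ₁₂ hcont ⟨hf₂, hf₁⟩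
  exact ⟨γ, hγ₁.trans_le hγ.1, hfγ⟩

/-- The dual objective in terms of the eigenvalues `e` of `TᵀT`, for `γ > max e`. -/
def dualObjective {n : Type*} [Fintype n] (e : n → ℝ) (ρ γ : ℝ) : ℝ :=
  γ * ρ ^ 2 + γ * ∑ i, e i / (γ - e i)

section Gram

variable {m ι : Type*} [Fintype m] [Fintype ι] [DecidableEq ι] {T : Matrix m ι ℝ}
  (hA : (Tᵀ * T).IsHermitian)

include hA in
lemma eigenvalues_transpose_mul_self_nonneg (i : ι) : 0 ≤ hA.eigenvalues i := by
  have hPSD : (Tᵀ * T).PosSemidef := by simpa using posSemidef_conjTranspose_mul_self T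
  exact hPSD.eigenvalues_nonneg i

include hA in
lemma exists_eigenvalues_transpose_mul_self_max_pos (hT : T ≠ 0) :
    ∃ i₀, (∀ i, hA.eigenvalues i ≤ hA.eigenvalues i₀) ∧ 0 < hA.eigenvalues i₀ := by
  have : Nonempty ι := by
    by_contra h
    exact hT (ext fun _ j => ((not_nonempty_iff.1 h).false j).elim)
  obtain ⟨i₀, hmax⟩ := Finite.exists_max hA.eigenvalues
  refine ⟨i₀, hmax, lt_of_le_of_ne (eigenvalues_transpose_mul_self_nonneg hA i₀) fun h => hT ?_⟩
  have hzero : hA.eigenvalues = 0 := funext fun i =>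
    le_antisymm ((hmax i).trans h.ge) (eigenvalues_transpose_mul_self_nonneg hA i)
  rw [← conjTranspose_mul_self_eq_zero, conjTranspose_eq_transpose_of_trivial]
  exact hA.eigenvalues_eq_zero_iff.1 hzero

end Gram

lemma opNormSq_eq_eigenvalues {r d : ℕ} {T : Matrix (Fin r) (Fin d) ℝ}
    (hA : (Tᵀ * T).IsHermitian) {i₀ : Fin d} (hmax : ∀ i, hA.eigenvalues i ≤ hA.eigenvalues i₀) :
    opNormSq T = hA.eigenvalues i₀ := by
  have hset : {c : ℝ | 0 ≤ c ∧ (c • (1 : Matrix (Fin d) (Fin d) ℝ) - Tᵀ * T).PosSemidef}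
      = Set.Ici (hA.eigenvalues i₀) := by
    ext c
    simp only [Set.mem_ofPred_eq, Set.mem_Ici, hA.posSemidef_smul_one_sub_iff]
    exact ⟨fun h => h.2 i₀, fun h =>
      ⟨(eigenvalues_transpose_mul_self_nonneg hA i₀).trans h, fun i => (hmax i).trans h⟩⟩
  rw [opNormSq, hset, csInf_Ici]

lemma dualObjective_eq {m ι : Type*} [Fintype m] [Fintype ι] [DecidableEq m] [DecidableEq ι]
    {T : Matrix m ι ℝ} (hA : (Tᵀ * T).IsHermitian) (ρ : ℝ) {γ : ℝ} (hγ0 : γ ≠ 0)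
    (hγ : ∀ i, hA.eigenvalues i < γ) :
    γ * ρ ^ 2 + γ * ((1 - γ⁻¹ • (T * Tᵀ))⁻¹ - 1).trace = dualObjective hA.eigenvalues ρ γ := by
  have hS := ((hA.posDef_smul_one_sub_iff γ).2 hγ).isUnit
  rw [trace_inv_one_sub_smul_mul_transpose_sub_one T hγ0 ((isUnit_iff_isUnit_det _).1 hS),
    hA.trace_mul_inv_smul_one_sub hγ, dualObjective]

namespace IsNominal

variable {ι : Type*} [Fintype ι] [DecidableEq ι] {P0 : Measure (ι → ℝ)} {r : ℕ}
  {T : Matrix (Fin r) ι ℝ} (hA : (Tᵀ * T).IsHermitian) {ρ : ℝ}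

include hA in
lemma le_dualObjective_of_mem_wcSet (hP0 : IsNominal P0) {e : ℝ} (he : e ∈ wcSet T P0 ρ)
    {γ : ℝ} (hγ0 : 0 ≤ γ) (hγ : ∀ i, hA.eigenvalues i < γ) :
    e ≤ dualObjective hA.eigenvalues ρ γ := by
  obtain ⟨P, hP, rfl⟩ := he
  rw [dualObjective, ← hA.trace_mul_inv_smul_one_sub hγ]
  exact integral_sqNorm_mulVec_le_of_memW2Ball hP0 hP T hγ0
    ((hA.posDef_smul_one_sub_iff γ).2 hγ)

include hA in
lemma exists_dualObjective_mem_wcSet (hP0 : IsNominal P0) {i₀ : ι}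
    (hmax : ∀ i, hA.eigenvalues i ≤ hA.eigenvalues i₀) (hpos : 0 < hA.eigenvalues i₀)
    (hρ : 0 < ρ) :
    ∃ γ, hA.eigenvalues i₀ < γ ∧ dualObjective hA.eigenvalues ρ γ ∈ wcSet T P0 ρ := by
  obtain ⟨γ, hγ, hcost⟩ := exists_sum_sq_div_sub_eq
    (eigenvalues_transpose_mul_self_nonneg hA) hmax hpos hρ
  set e := hA.eigenvalues
  have hne (i : ι) : γ - e i ≠ 0 := (sub_pos.2 ((hmax i).trans_lt hγ)).ne'
  -- the worst case is the pushforward of `P0` under `L = γ (γ - TᵀT)⁻¹`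
  set L := hA.conjDiagonal fun i => γ / (γ - e i)
  have hL1 : L - 1 = hA.conjDiagonal fun i => e i / (γ - e i) := by
    rw [← one_smul ℝ (1 : Matrix ι ι ℝ), ← hA.conjDiagonal_const, hA.conjDiagonal_sub]
    congr 1
    funext i
    field_simp [hne i]
    ring
  have hcost' : ((L - 1)ᵀ * (L - 1)).trace = ρ ^ 2 := by
    rw [hL1, hA.transpose_conjDiagonal, hA.conjDiagonal_mul, hA.trace_conjDiagonal, ← hcost]
    simp_rw [sq]
  have hvalue : ((T * L)ᵀ * (T * L)).trace = dualObjective e ρ γ := by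
    rw [transpose_mul, Matrix.mul_assoc, ← Matrix.mul_assoc Tᵀ, hA.transpose_conjDiagonal]
    nth_rw 2 [← hA.conjDiagonal_eigenvalues]
    rw [hA.conjDiagonal_mul, hA.conjDiagonal_mul, hA.trace_conjDiagonal, dualObjective, ← hcost,
      Finset.mul_sum, Finset.mul_sum, ← Finset.sum_add_distrib]
    refine Finset.sum_congr rfl fun i _ => ?_
    field_simp [hne i]
    ring
  exact ⟨γ, hγ, hvalue ▸ hP0.trace_mem_wcSet T L hcost'.le⟩

end IsNominal

/-- Strong duality for the Wasserstein-2 worst-case quadratic objective (finite horizon). -/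
theorem stmt_4 {r d : ℕ} (T : Matrix (Fin r) (Fin d) ℝ) (hT : T ≠ 0)
    (P0 : Measure (Fin d → ℝ)) (hP0 : IsNominal P0) (ρ : ℝ) (hρ : 0 < ρ) :
    (wcSet T P0 ρ).Nonempty ∧ BddAbove (wcSet T P0 ρ) ∧
      sSup (wcSet T P0 ρ) =
        sInf {v : ℝ | ∃ γ : ℝ, opNormSq T < γ ∧
          v = γ * ρ ^ 2 +
              γ * (((1 : Matrix (Fin r) (Fin r) ℝ) - γ⁻¹ • (T * Tᵀ))⁻¹ - 1).trace} := by
  have hA : (Tᵀ * T).IsHermitian := by simpa using isHermitian_conjTranspose_mul_self T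
  obtain ⟨i₀, hmax, hpos⟩ := exists_eigenvalues_transpose_mul_self_max_pos hA hT
  have hlt {γ : ℝ} (hγ : hA.eigenvalues i₀ < γ) (i : Fin d) : hA.eigenvalues i < γ :=
    (hmax i).trans_lt hγ
  have hweak {e γ : ℝ} (he : e ∈ wcSet T P0 ρ) (hγ : hA.eigenvalues i₀ < γ) :
      e ≤ dualObjective hA.eigenvalues ρ γ :=
    hP0.le_dualObjective_of_mem_wcSet hA he (hpos.trans hγ).le (hlt hγ)
  obtain ⟨γ₀, hγ₀, hmem⟩ := hP0.exists_dualObjective_mem_wcSet hA hmax hpos hρ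
  have hgreatest : IsGreatest (wcSet T P0 ρ) (dualObjective hA.eigenvalues ρ γ₀) :=
    ⟨hmem, fun e he => hweak he hγ₀⟩
  have hleast : IsLeast {v : ℝ | ∃ γ : ℝ, opNormSq T < γ ∧
      v = γ * ρ ^ 2 + γ * (((1 : Matrix (Fin r) (Fin r) ℝ) - γ⁻¹ • (T * Tᵀ))⁻¹ - 1).trace}
      (dualObjective hA.eigenvalues ρ γ₀) := by
    rw [opNormSq_eq_eigenvalues hA hmax]
    refine ⟨⟨γ₀, hγ₀, (dualObjective_eq hA ρ (hpos.trans hγ₀).ne' (hlt hγ₀)).symm⟩, ?_⟩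
    rintro v ⟨γ, hγ, rfl⟩
    rw [dualObjective_eq hA ρ (hpos.trans hγ).ne' (hlt hγ)]
    exact hweak hmem hγ
  exact ⟨hgreatest.nonempty, hgreatest.bddAbove, hgreatest.csSup_eq.trans hleast.csInf_eq.symm⟩
end
end

section
/- Fenchel-type identity for the trace of the inverse: (a) For every real symmetric positive definite n×n matrix X, sup{ −Tr(XM) + 2·Tr(√M) : M real symmetric, M ≻ 0 } = Tr(X⁻¹), and the supremum is attained uniquely at M = X⁻². (b) If X is real symmetric but not positive definite, then this supremum equals +∞. -/
/-!
For `X ≻ 0` write `A = √X` and `S = √M`. Since `A` and `S` are symmetric,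
`Tr(XM) − 2 Tr S + Tr X⁻¹ = Tr((AS − A⁻¹)(AS − A⁻¹)ᵀ) ≥ 0`,
with equality iff `AS = A⁻¹`, i.e. `√M = X⁻¹`.
If `X` is symmetric but not positive definite, pick `v ≠ 0` with `vᵀXv ≤ 0`. Along
`M = (1 + t vvᵀ)²` the term `−Tr(XM)` stays above `−Tr X`, while `2 Tr √M = 2n + 2t|v|²`
grows without bound.
-/

open Matrix

noncomputable section

open scoped Classical

/-- The positive semidefinite square root of a positive semidefinite real symmetric
matrix (junk value `0` if the matrix is not positive semidefinite). -/
def psdSqrt {n : Type*} [Fintype n] [DecidableEq n] (A : Matrix n n ℝ) : Matrix n n ℝ :=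
  if h : A.PosSemidef then
    (h.1.eigenvectorUnitary : Matrix n n ℝ) * diagonal ((↑) ∘ Real.sqrt ∘ h.1.eigenvalues) *
      (star h.1.eigenvectorUnitary : Matrix n n ℝ)
  else 0

namespace Matrix

section psdSqrt

open scoped MatrixOrder

variable {ι : Type*} [Fintype ι] [DecidableEq ι] {M N : Matrix ι ι ℝ}

lemma psdSqrt_eq_cfcSqrt (hM : M.PosSemidef) : psdSqrt M = CFC.sqrt M := by
  rw [psdSqrt, dif_pos hM, CFC.sqrt_eq_cfc, cfc_nnreal_eq_real _ M, hM.1.cfc_eq]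
  simp only [IsHermitian.cfc, Real.coe_sqrt, Real.coe_toNNReal']
  congr 2
  funext i
  congr 1
  congr 1
  funext j
  simp only [Function.comp_apply, max_eq_left (hM.eigenvalues_nonneg j)]

lemma PosSemidef.psdSqrt (hM : M.PosSemidef) : (psdSqrt M).PosSemidef := by
  rw [psdSqrt_eq_cfcSqrt hM]
  exact (CFC.sqrt_nonneg M).posSemidef

lemma psdSqrt_mul_psdSqrt_self (hM : M.PosSemidef) : psdSqrt M * psdSqrt M = M := by
  rw [psdSqrt_eq_cfcSqrt hM]
  exact CFC.sqrt_mul_sqrt_self M hM.nonneg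

lemma psdSqrt_mul_self (hN : N.PosSemidef) : psdSqrt (N * N) = N := by
  rw [psdSqrt_eq_cfcSqrt (by simpa only [sq] using hN.pow 2)]
  exact CFC.sqrt_mul_self N hN.nonneg

lemma isUnit_det_psdSqrt (hM : M.PosDef) : IsUnit (psdSqrt M).det := by
  have h := hM.isUnit.map detMonoidHom
  rw [← psdSqrt_mul_psdSqrt_self hM.posSemidef, map_mul] at h
  exact (IsUnit.mul_iff.1 h).1

end psdSqrt

lemma PosDef.mul_self {ι K : Type*} [Fintype ι] [DecidableEq ι] [Field K] [PartialOrder K]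
    [StarRing K] [StarOrderedRing K] {A : Matrix ι ι K} (hA : A.PosDef) : (A * A).PosDef := by
  simpa only [hA.isHermitian.eq, Matrix.mul_one] using
    PosDef.one.conjTranspose_mul_mul_same (mulVec_injective_iff_isUnit.2 hA.isUnit)

lemma trace_mul_sub_inv_mul_conjTranspose {ι R : Type*} [Fintype ι] [DecidableEq ι] [CommRing R]
    [StarRing R] {A S : Matrix ι ι R} (hA : A.IsHermitian) (hS : S.IsHermitian)
    (hdet : IsUnit A.det) :
    ((A * S - A⁻¹) * (A * S - A⁻¹)ᴴ).trace =
      (A * A * (S * S)).trace - 2 * S.trace + (A * A)⁻¹.trace := by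
  have hAinv : (A⁻¹)ᴴ = A⁻¹ := by rw [conjTranspose_nonsing_inv, hA.eq]
  have expand : (A * S - A⁻¹) * (A * S - A⁻¹)ᴴ =
      A * (S * S) * A - A * S * A⁻¹ - A⁻¹ * (S * A) + A⁻¹ * A⁻¹ := by
    rw [conjTranspose_sub, conjTranspose_mul, hA.eq, hS.eq, hAinv]
    noncomm_ring
  have t1 : (A * S * A⁻¹).trace = S.trace := by
    rw [trace_mul_cycle, nonsing_inv_mul A hdet, Matrix.one_mul]
  have t2 : (A⁻¹ * (S * A)).trace = S.trace := by
    rw [trace_mul_comm, Matrix.mul_assoc, mul_nonsing_inv A hdet, Matrix.mul_one]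
  rw [expand, trace_add, trace_sub, trace_sub, t1, t2, trace_mul_cycle, mul_inv_rev]
  ring

section fenchel

variable {ι : Type*} [Fintype ι] [DecidableEq ι] {X M : Matrix ι ι ℝ}

def fenchelObjective (X M : Matrix ι ι ℝ) : ℝ := -(X * M).trace + 2 * (psdSqrt M).trace

lemma fenchelObjective_add_trace_mul_conjTranspose (hX : X.PosDef) (hM : M.PosSemidef) :
    fenchelObjective X M +
        ((psdSqrt X * psdSqrt M - (psdSqrt X)⁻¹) *
          (psdSqrt X * psdSqrt M - (psdSqrt X)⁻¹)ᴴ).trace = X⁻¹.trace := by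
  have h := trace_mul_sub_inv_mul_conjTranspose hX.posSemidef.psdSqrt.isHermitian
    hM.psdSqrt.isHermitian (isUnit_det_psdSqrt hX)
  rw [psdSqrt_mul_psdSqrt_self hX.posSemidef, psdSqrt_mul_psdSqrt_self hM] at h
  rw [fenchelObjective, h]
  ring

lemma fenchelObjective_le_trace_inv (hX : X.PosDef) (hM : M.PosSemidef) :
    fenchelObjective X M ≤ X⁻¹.trace := by
  rw [← fenchelObjective_add_trace_mul_conjTranspose hX hM]
  exact le_add_of_nonneg_right (posSemidef_self_mul_conjTranspose _).trace_nonneg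

lemma fenchelObjective_inv_mul_inv (hX : X.PosDef) :
    fenchelObjective X (X⁻¹ * X⁻¹) = X⁻¹.trace := by
  rw [fenchelObjective, psdSqrt_mul_self hX.inv.posSemidef, ← Matrix.mul_assoc,
    mul_nonsing_inv X (hX.isUnit.map detMonoidHom), Matrix.one_mul]
  ring

lemma eq_inv_mul_inv_of_fenchelObjective_eq (hX : X.PosDef) (hM : M.PosSemidef)
    (h : fenchelObjective X M = X⁻¹.trace) : M = X⁻¹ * X⁻¹ := by
  have hgap := fenchelObjective_add_trace_mul_conjTranspose hX hM
  rw [h, add_eq_left, trace_mul_conjTranspose_self_eq_zero_iff, sub_eq_zero] at hgap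
  have hsqrt : psdSqrt M = X⁻¹ := calc
    psdSqrt M = (psdSqrt X)⁻¹ * (psdSqrt X * psdSqrt M) := by
      rw [← Matrix.mul_assoc, nonsing_inv_mul _ (isUnit_det_psdSqrt hX), Matrix.one_mul]
    _ = X⁻¹ := by rw [hgap, ← mul_inv_rev, psdSqrt_mul_psdSqrt_self hX.posSemidef]
  rw [← psdSqrt_mul_psdSqrt_self hM, hsqrt]

lemma isGreatest_fenchelObjective (hX : X.PosDef) :
    IsGreatest {v | ∃ M : Matrix ι ι ℝ, M.PosDef ∧ v = fenchelObjective X M} X⁻¹.trace :=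
  ⟨⟨X⁻¹ * X⁻¹, hX.inv.mul_self, (fenchelObjective_inv_mul_inv hX).symm⟩,
    fun _ ⟨_, hM, hv⟩ => hv ▸ fenchelObjective_le_trace_inv hX hM.posSemidef⟩

omit [DecidableEq ι] in
lemma exists_dotProduct_mulVec_nonpos (hX : X.IsHermitian) (hX' : ¬X.PosDef) :
    ∃ v ≠ 0, v ⬝ᵥ X *ᵥ v ≤ 0 := by
  by_contra! h
  exact hX' (.of_dotProduct_mulVec_pos hX fun x hx => by simpa using h x hx)

lemma fenchelObjective_one_add_smul_vecMulVec_mul_self (X : Matrix ι ι ℝ) (v : ι → ℝ) {t : ℝ}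
    (ht : 0 ≤ t) :
    fenchelObjective X ((1 + t • vecMulVec v v) * (1 + t • vecMulVec v v)) =
      -X.trace + 2 * Fintype.card ι + 2 * t * (v ⬝ᵥ v) -
        (2 * t + t ^ 2 * (v ⬝ᵥ v)) * (v ⬝ᵥ X *ᵥ v) := by
  have hN : (1 + t • vecMulVec v v).PosSemidef :=
    PosSemidef.one.add ((posSemidef_vecMulVec_self_star v).smul ht)
  have hsq : (1 + t • vecMulVec v v) * (1 + t • vecMulVec v v) =
      1 + (2 * t + t ^ 2 * (v ⬝ᵥ v)) • vecMulVec v v := by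
    simp only [Matrix.add_mul, Matrix.mul_add, Matrix.one_mul, Matrix.mul_one, smul_mul_smul,
      vecMulVec_mul_vecMulVec, vecMulVec_smul]
    module
  rw [fenchelObjective, psdSqrt_mul_self hN, hsq, Matrix.mul_add, Matrix.mul_one,
    Matrix.mul_smul, mul_vecMulVec, trace_add, trace_add, trace_smul, trace_smul, trace_one,
    trace_vecMulVec, trace_vecMulVec, dotProduct_comm (X *ᵥ v), smul_eq_mul, smul_eq_mul]
  ring

lemma not_bddAbove_fenchelObjective (hX : X.IsHermitian) (hX' : ¬X.PosDef) :
    ¬BddAbove {v | ∃ M : Matrix ι ι ℝ, M.PosDef ∧ v = fenchelObjective X M} := by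
  obtain ⟨v, hv, hXv⟩ := exists_dotProduct_mulVec_nonpos hX hX'
  have hvv : 0 < v ⬝ᵥ v := by simpa using dotProduct_star_self_pos_iff.2 hv
  rw [not_bddAbove_iff]
  intro C
  set t := (|C| + |X.trace| + 1) / (v ⬝ᵥ v)
  have ht : 0 ≤ t := by positivity
  have hN : (1 + t • vecMulVec v v).PosDef :=
    PosDef.one.add_posSemidef ((posSemidef_vecMulVec_self_star v).smul ht)
  refine ⟨_, ⟨_, hN.mul_self, rfl⟩, ?_⟩
  rw [fenchelObjective_one_add_smul_vecMulVec_mul_self X v ht]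
  have hgain : t * (v ⬝ᵥ v) = |C| + |X.trace| + 1 := div_mul_cancel₀ _ hvv.ne'
  have hloss : (2 * t + t ^ 2 * (v ⬝ᵥ v)) * (v ⬝ᵥ X *ᵥ v) ≤ 0 :=
    mul_nonpos_of_nonneg_of_nonpos (by positivity) hXv
  linarith [le_abs_self C, abs_nonneg C, le_abs_self X.trace, abs_nonneg X.trace,
    (Fintype.card ι).cast_nonneg (α := ℝ)]

end fenchel

end Matrix

/-- Fenchel-type identity for the trace of the inverse:
(a) if `X ≻ 0` then `sup {−Tr(XM) + 2 Tr(√M) : M ≻ 0} = Tr(X⁻¹)`, attained uniquely at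
`M = X⁻²`; (b) if `X` is symmetric but not positive definite, the supremum is `+∞`. -/
theorem stmt_9 {n : ℕ} (X : Matrix (Fin n) (Fin n) ℝ) :
    (X.PosDef →
      IsGreatest
          {v : ℝ | ∃ M : Matrix (Fin n) (Fin n) ℝ, M.PosDef ∧
            v = -(X * M).trace + 2 * (psdSqrt M).trace}
          (X⁻¹).trace ∧
        (-(X * (X⁻¹ * X⁻¹)).trace + 2 * (psdSqrt (X⁻¹ * X⁻¹)).trace = (X⁻¹).trace) ∧
        ∀ M : Matrix (Fin n) (Fin n) ℝ, M.PosDef →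
          -(X * M).trace + 2 * (psdSqrt M).trace = (X⁻¹).trace → M = X⁻¹ * X⁻¹) ∧
      (X.IsHermitian → ¬X.PosDef →
        ¬BddAbove {v : ℝ | ∃ M : Matrix (Fin n) (Fin n) ℝ, M.PosDef ∧
          v = -(X * M).trace + 2 * (psdSqrt M).trace}) :=
  ⟨fun hX => ⟨isGreatest_fenchelObjective hX, fenchelObjective_inv_mul_inv hX,
      fun _ hM => eq_inv_mul_inv_of_fenchelObjective_eq hX hM.posSemidef⟩,
    not_bddAbove_fenchelObjective⟩
end
end

section
/- Finite-dimensional Wiener–Hopf projection: Let U ∈ ℝ^{r×r} and Δ ∈ ℝ^{q×q} be block lower-triangular and invertible (with respect to fixed block partitions), and let G ∈ ℝ^{r×q} be arbitrary. Then min{ ‖U K Δ − U G Δ‖_F : K ∈ ℝ^{r×q} block lower-triangular } = ‖{U G Δ}_−‖_F, and the unique minimizer is K* = U⁻¹ ⌊U G Δ⌋ Δ⁻¹, which is itself block lower-triangular. -/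
open Matrix

noncomputable section

/-- Block lower-triangular with respect to (monotone) block-index maps `βr`, `βc`. -/
def BLT {r q : ℕ} (βr : Fin r → ℕ) (βc : Fin q → ℕ) (K : Matrix (Fin r) (Fin q) ℝ) : Prop :=
  ∀ i j, βr i < βc j → K i j = 0

/-- The block lower-triangular part `⌊X⌋` (zeroing all blocks strictly above the
block diagonal). -/
def lowPart {r q : ℕ} (βr : Fin r → ℕ) (βc : Fin q → ℕ) (X : Matrix (Fin r) (Fin q) ℝ) :
    Matrix (Fin r) (Fin q) ℝ :=
  Matrix.of fun i j => if βr i < βc j then 0 else X i j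

/-- The Frobenius norm. -/
def frob {r q : ℕ} (X : Matrix (Fin r) (Fin q) ℝ) : ℝ :=
  Real.sqrt (∑ i, ∑ j, (X i j) ^ 2)

lemma BLT_mul {r s q : ℕ} {βr : Fin r → ℕ} {βs : Fin s → ℕ} {βc : Fin q → ℕ}
    {A : Matrix (Fin r) (Fin s) ℝ} {B : Matrix (Fin s) (Fin q) ℝ}
    (hA : BLT βr βs A) (hB : BLT βs βc B) : BLT βr βc (A * B) := by
  intro i j hij
  rw [Matrix.mul_apply]
  refine Finset.sum_eq_zero fun k _ => ?_
  rcases lt_or_ge (βr i) (βs k) with h | h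
  · rw [hA i k h, zero_mul]
  · rw [hB k j (lt_of_le_of_lt h hij), mul_zero]

lemma BLT_inv {r : ℕ} {βr : Fin r → ℕ} {U : Matrix (Fin r) (Fin r) ℝ}
    (hU : BLT βr βr U) (hdet : IsUnit U.det) : BLT βr βr U⁻¹ := by
  haveI := U.invertibleOfIsUnitDet hdet
  have h : Matrix.BlockTriangular U (OrderDual.toDual ∘ βr) := fun i j hij => hU i j hij
  have h2 := Matrix.blockTriangular_inv_of_blockTriangular h
  intro i j hij
  exact h2 hij

lemma frob_sub_comm {r q : ℕ} (X Y : Matrix (Fin r) (Fin q) ℝ) :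
    frob (X - Y) = frob (Y - X) := by
  unfold frob
  congr 1
  refine Finset.sum_congr rfl fun i _ => Finset.sum_congr rfl fun j _ => ?_
  simp [Matrix.sub_apply]
  ring

/-- Key entrywise decomposition. -/
lemma key_decomp {r q : ℕ} (βr : Fin r → ℕ) (βc : Fin q → ℕ)
    (M A : Matrix (Fin r) (Fin q) ℝ) (hM : BLT βr βc M) :
    ∑ i, ∑ j, (M i j - A i j) ^ 2 =
      (∑ i, ∑ j, (M i j - lowPart βr βc A i j) ^ 2) +
      ∑ i, ∑ j, (A i j - lowPart βr βc A i j) ^ 2 := by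
  rw [← Finset.sum_add_distrib]
  refine Finset.sum_congr rfl fun i _ => ?_
  rw [← Finset.sum_add_distrib]
  refine Finset.sum_congr rfl fun j _ => ?_
  by_cases h : βr i < βc j
  · simp [lowPart, h, hM i j h]
  · simp [lowPart, h]

/-- Finite-dimensional Wiener–Hopf projection: over block lower-triangular `K`,
`‖UKΔ − UGΔ‖_F` is minimized uniquely at `K* = U⁻¹⌊UGΔ⌋Δ⁻¹`, with minimum value
`‖{UGΔ}_−‖_F`, and `K*` is itself block lower-triangular. -/
theorem stmt_10 {r q : ℕ} (βr : Fin r → ℕ) (βc : Fin q → ℕ)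
    (hβr : Monotone βr) (hβc : Monotone βc)
    (U : Matrix (Fin r) (Fin r) ℝ) (hUblt : BLT βr βr U) (hUdet : IsUnit U.det)
    (Δ : Matrix (Fin q) (Fin q) ℝ) (hΔblt : BLT βc βc Δ) (hΔdet : IsUnit Δ.det)
    (G : Matrix (Fin r) (Fin q) ℝ) :
    BLT βr βc (U⁻¹ * lowPart βr βc (U * G * Δ) * Δ⁻¹) ∧
      IsLeast {v : ℝ | ∃ K, BLT βr βc K ∧ v = frob (U * K * Δ - U * G * Δ)}
        (frob (U * G * Δ - lowPart βr βc (U * G * Δ))) ∧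
      frob (U * (U⁻¹ * lowPart βr βc (U * G * Δ) * Δ⁻¹) * Δ - U * G * Δ) =
        frob (U * G * Δ - lowPart βr βc (U * G * Δ)) ∧
      ∀ K : Matrix (Fin r) (Fin q) ℝ, BLT βr βc K →
        frob (U * K * Δ - U * G * Δ) = frob (U * G * Δ - lowPart βr βc (U * G * Δ)) →
        K = U⁻¹ * lowPart βr βc (U * G * Δ) * Δ⁻¹ := by
  set A := U * G * Δ with hA
  set L := lowPart βr βc A with hL
  have hLblt : BLT βr βc L := by
    intro i j hij
    simp [hL, lowPart, hij]
  have hKstar : BLT βr βc (U⁻¹ * L * Δ⁻¹) :=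
    BLT_mul (BLT_mul (BLT_inv hUblt hUdet) hLblt) (BLT_inv hΔblt hΔdet)
  have hUK : U * (U⁻¹ * L * Δ⁻¹) * Δ = L := by
    rw [← Matrix.mul_assoc, ← Matrix.mul_assoc, Matrix.mul_nonsing_inv U hUdet,
      Matrix.one_mul, Matrix.mul_assoc, Matrix.nonsing_inv_mul Δ hΔdet, Matrix.mul_one]
  -- frob of (L - A) equals frob (A - L)
  have hfrobLA : frob (L - A) = frob (A - L) := frob_sub_comm L A
  -- the key sum inequality
  have hkey : ∀ K : Matrix (Fin r) (Fin q) ℝ, BLT βr βc K →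
      frob (U * K * Δ - A) =
        Real.sqrt ((∑ i, ∑ j, ((U * K * Δ) i j - L i j) ^ 2) +
          ∑ i, ∑ j, (A i j - L i j) ^ 2) := by
    intro K hK
    have hMblt : BLT βr βc (U * K * Δ) := BLT_mul (BLT_mul hUblt hK) hΔblt
    unfold frob
    congr 1
    have := key_decomp βr βc (U * K * Δ) A hMblt
    simpa [Matrix.sub_apply] using this
  have hfrobAL : frob (A - L) = Real.sqrt (∑ i, ∑ j, (A i j - L i j) ^ 2) := by
    unfold frob; simp [Matrix.sub_apply]
  have hnn1 : ∀ (X : Matrix (Fin r) (Fin q) ℝ),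
      (0:ℝ) ≤ ∑ i, ∑ j, (X i j) ^ 2 := fun X =>
    Finset.sum_nonneg fun i _ => Finset.sum_nonneg fun j _ => sq_nonneg _
  have hnnAL : (0:ℝ) ≤ ∑ i, ∑ j, (A i j - L i j) ^ 2 :=
    Finset.sum_nonneg fun i _ => Finset.sum_nonneg fun j _ => sq_nonneg _
  refine ⟨hKstar, ⟨⟨U⁻¹ * L * Δ⁻¹, hKstar, ?_⟩, ?_⟩, ?_, ?_⟩
  · rw [hUK, hfrobLA]
  · -- lower bound
    rintro v ⟨K, hK, rfl⟩
    rw [hkey K hK, hfrobAL]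
    apply Real.sqrt_le_sqrt
    have := Finset.sum_nonneg (fun i (_ : i ∈ Finset.univ) =>
      Finset.sum_nonneg fun j (_ : j ∈ Finset.univ) =>
        sq_nonneg ((U * K * Δ) i j - L i j))
    linarith
  · rw [hUK, hfrobLA]
  · -- uniqueness
    intro K hK heq
    rw [hkey K hK, hfrobAL] at heq
    have hnnM : (0:ℝ) ≤ ∑ i, ∑ j, ((U * K * Δ) i j - L i j) ^ 2 :=
      Finset.sum_nonneg fun i _ => Finset.sum_nonneg fun j _ => sq_nonneg _
    have hsum : (∑ i, ∑ j, ((U * K * Δ) i j - L i j) ^ 2) +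
        (∑ i, ∑ j, (A i j - L i j) ^ 2) = ∑ i, ∑ j, (A i j - L i j) ^ 2 := by
      exact (Real.sqrt_inj (by positivity) (by positivity)).mp heq
    have hzero : (∑ i, ∑ j, ((U * K * Δ) i j - L i j) ^ 2) = 0 := by linarith
    have hML : U * K * Δ = L := by
      ext i j
      have h1 : ∀ i ∈ Finset.univ, (0:ℝ) ≤ ∑ j, ((U * K * Δ) i j - L i j) ^ 2 :=
        fun i _ => Finset.sum_nonneg fun j _ => sq_nonneg _
      have h2 := (Finset.sum_eq_zero_iff_of_nonneg h1).mp hzero i (Finset.mem_univ i)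
      have h3 := (Finset.sum_eq_zero_iff_of_nonneg
        (fun j (_ : j ∈ Finset.univ) => sq_nonneg ((U * K * Δ) i j - L i j))).mp h2
        j (Finset.mem_univ j)
      have := pow_eq_zero_iff (n := 2) (by norm_num) |>.mp h3
      linarith [sub_eq_zero.mp this]
    have : U⁻¹ * (U * K * Δ) * Δ⁻¹ = U⁻¹ * L * Δ⁻¹ := by rw [hML]
    rw [← this, ← Matrix.mul_assoc, ← Matrix.mul_assoc, Matrix.nonsing_inv_mul U hUdet,
      Matrix.one_mul, Matrix.mul_assoc, Matrix.mul_nonsing_inv Δ hΔdet, Matrix.mul_one]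
end
end

section
/- Convexity of the rational-approximation feasibility set: Fix m ∈ ℕ, ε ≥ 0, and a function M : 𝕋 → ℝ on the unit circle. The set of pairs of coefficient vectors ((p₀,…,p_m), (q₀,…,q_m)) ∈ ℝ^{m+1} × ℝ^{m+1} such that the associated symmetric Laurent polynomials P and Q satisfy (i) P(z) > 0 and Q(z) > 0 for all z ∈ 𝕋, (ii) q₀ = 1, and (iii) |P(z)/Q(z) − M(z)| ≤ ε for all z ∈ 𝕋, is a convex subset of ℝ^{2(m+1)}. -/
/-!
Where `Q > 0`, the constraint `‖P / Q - M‖ ≤ ε` is equivalent to `‖P - M Q‖ ≤ ε Q`, which is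
jointly convex in `(P, Q)`. Since `P(z)` and `Q(z)` depend linearly on the coefficients, the
feasibility set is the intersection of the hyperplane `q₀ = 1` with, for each `z ∈ 𝕋`, the
preimage of a convex subset of `ℂ × ℂ` under a linear map.
-/

noncomputable section

/-- Evaluation of the symmetric Laurent polynomial
`P(z) = p₀ + ∑_{k=1}^m p_k (z^k + z^{−k})` with coefficient vector `p`. -/
def lEval (m : ℕ) (p : Fin (m + 1) → ℝ) (z : ℂ) : ℂ :=
  (∑ k : Fin (m + 1), (p k : ℂ) * (z ^ (k : ℕ) + z⁻¹ ^ (k : ℕ))) - (p 0 : ℂ)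

namespace RCLike

open scoped ComplexOrder

variable {𝕜 : Type*} [RCLike 𝕜]

lemma norm_div_sub_ofReal_le_iff {P Q : 𝕜} (hQ : 0 < Q) (c ε : ℝ) :
    ‖P / Q - c‖ ≤ ε ↔ ‖P - c * Q‖ ≤ ε * re Q := by
  obtain ⟨q, hq, rfl⟩ := pos_iff_exists_ofReal.mp hQ
  rw [ofReal_re, ← div_le_iff₀ hq, div_sub' (ofReal_ne_zero.2 hq.ne'), norm_div, norm_ofReal,
    abs_of_pos hq, mul_comm]

/-- A convex cone: `‖P - c Q‖` is a seminorm of `(P, Q)` and `ε re Q` is linear. -/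
lemma convex_setOf_norm_sub_mul_le (c ε : ℝ) :
    Convex ℝ {w : 𝕜 × 𝕜 | ‖w.1 - c * w.2‖ ≤ ε * re w.2} := by
  rintro ⟨P₁, Q₁⟩ h₁ ⟨P₂, Q₂⟩ h₂ a b ha hb -
  simp only [Set.mem_ofPred_eq, Prod.smul_mk, Prod.mk_add_mk, real_smul_eq_coe_mul, map_add,
    re_ofReal_mul] at h₁ h₂ ⊢
  calc ‖a * P₁ + b * P₂ - c * (a * Q₁ + b * Q₂)‖
      = ‖(a : 𝕜) * (P₁ - c * Q₁) + (b : 𝕜) * (P₂ - c * Q₂)‖ := by ring_nf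
    _ ≤ a * ‖P₁ - c * Q₁‖ + b * ‖P₂ - c * Q₂‖ := by
      refine (norm_add_le _ _).trans_eq ?_
      rw [norm_mul, norm_mul, norm_ofReal, norm_ofReal, abs_of_nonneg ha, abs_of_nonneg hb]
    _ ≤ a * (ε * re Q₁) + b * (ε * re Q₂) := by gcongr
    _ = ε * (a * re Q₁ + b * re Q₂) := by ring

lemma convex_setOf_pos_pos_norm_div_sub_le (c ε : ℝ) :
    Convex ℝ {w : 𝕜 × 𝕜 | 0 < w.1 ∧ 0 < w.2 ∧ ‖w.1 / w.2 - c‖ ≤ ε} := by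
  have h : {w : 𝕜 × 𝕜 | 0 < w.1 ∧ 0 < w.2 ∧ ‖w.1 / w.2 - c‖ ≤ ε} =
      Prod.fst ⁻¹' Set.Ioi 0 ∩ (Prod.snd ⁻¹' Set.Ioi 0 ∩
        {w : 𝕜 × 𝕜 | ‖w.1 - c * w.2‖ ≤ ε * re w.2}) := by
    ext ⟨P, Q⟩
    simp only [Set.mem_ofPred_eq, Set.mem_inter_iff, Set.mem_preimage, Set.mem_Ioi]
    exact and_congr_right fun _ => and_congr_right fun hQ => norm_div_sub_ofReal_le_iff hQ c ε
  rw [h]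
  exact ((convex_Ioi 0).linear_preimage (LinearMap.fst ℝ 𝕜 𝕜)).inter
    (((convex_Ioi 0).linear_preimage (LinearMap.snd ℝ 𝕜 𝕜)).inter
      (convex_setOf_norm_sub_mul_le c ε))

end RCLike

def lEvalₗ (m : ℕ) (z : ℂ) : (Fin (m + 1) → ℝ) →ₗ[ℝ] ℂ where
  toFun p := lEval m p z
  map_add' p q := by
    simp only [lEval, Pi.add_apply, Complex.ofReal_add, add_mul, Finset.sum_add_distrib]
    ring
  map_smul' a p := by
    simp only [lEval, Pi.smul_apply, smul_eq_mul, Complex.ofReal_mul, mul_assoc,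
      ← Finset.mul_sum, RingHom.id_apply, Complex.real_smul]
    ring

open ComplexOrder in
theorem stmt_12_general (m : ℕ) (ε : ℝ) (M : ℂ → ℝ) :
    Convex ℝ {pq : (Fin (m + 1) → ℝ) × (Fin (m + 1) → ℝ) |
      (∀ z : ℂ, ‖z‖ = 1 → 0 < lEval m pq.1 z ∧ 0 < lEval m pq.2 z) ∧
      pq.2 0 = 1 ∧
      (∀ z : ℂ, ‖z‖ = 1 →
        ‖lEval m pq.1 z / lEval m pq.2 z - (M z : ℂ)‖ ≤ ε)} := by
  convert (convex_hyperplane ((LinearMap.proj 0).comp (LinearMap.snd ℝ _ _)).isLinear 1).inter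
    (convex_iInter₂ fun z (_ : z ∈ Metric.sphere (0 : ℂ) 1) =>
      (RCLike.convex_setOf_pos_pos_norm_div_sub_le (M z) ε).linear_preimage
        ((lEvalₗ m z).prodMap (lEvalₗ m z))) using 1
  · rfl
  ext pq
  simp only [forall_and, Set.mem_ofPred_eq, LinearMap.coe_comp, LinearMap.coe_proj,
    LinearMap.coe_snd, Function.comp_apply, Function.eval, mem_sphere_iff_norm, sub_zero, lEvalₗ,
    Set.preimage_ofPred_eq, LinearMap.prodMap_apply, LinearMap.coe_mk, AddHom.coe_mk,
    Set.mem_inter_iff, Set.mem_iInter]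
  tauto

open ComplexOrder in
/-- Convexity of the rational-approximation feasibility set. -/
theorem stmt_12 (m : ℕ) (ε : ℝ) (hε : 0 ≤ ε) (M : ℂ → ℝ) :
    Convex ℝ {pq : (Fin (m + 1) → ℝ) × (Fin (m + 1) → ℝ) |
      (∀ z : ℂ, ‖z‖ = 1 → 0 < lEval m pq.1 z ∧ 0 < lEval m pq.2 z) ∧
      pq.2 0 = 1 ∧
      (∀ z : ℂ, ‖z‖ = 1 →
        ‖lEval m pq.1 z / lEval m pq.2 z - (M z : ℂ)‖ ≤ ε)} :=
  stmt_12_general m ε M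
end
end

section
/- Pointwise spectral factorization from the discrete algebraic Riccati equation: Let A ∈ ℝ^{n×n}, B ∈ ℝ^{n×m}, C ∈ ℝ^{p×n}, and let P be a real symmetric positive semidefinite matrix satisfying P = A P Aᵀ + B Bᵀ − F R Fᵀ, where R := I + C P Cᵀ and F := A P Cᵀ R⁻¹. Then for every z ∈ ℂ with |z| = 1 such that zI − A is invertible: (I + C(zI − A)⁻¹F) · R · (I + C(zI − A)⁻¹F)* = I + C(zI − A)⁻¹ B Bᵀ ((zI − A)⁻¹)* Cᵀ, where * denotes the conjugate transpose. Moreover, for every z ∈ ℂ such that both zI − A and zI − (A − FC) are invertible: (I + C(zI − A)⁻¹F) · (I − C(zI − (A − FC))⁻¹F) = I. -/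
open Matrix

noncomputable section

/-! With `G = z • 1 - A` and `star z * z = 1` one has `P - A P Aᴴ = G P Gᴴ + G P Aᴴ + A P Gᴴ`, so the
Riccati equation writes `B Bᴴ` as these three terms plus `F R Fᴴ`. Sandwiched between `C G⁻¹` and its
adjoint, `G P Gᴴ` becomes `C P Cᴴ = R - 1`, and because `F R = A P Cᴴ` the two cross terms become
the cross terms of `(1 + C G⁻¹ F) R (1 + C G⁻¹ F)ᴴ`. The second identity follows from the push-through
relation `(1 + C G⁻¹ F) C = C G⁻¹ (G + F C)`. -/

/-- A real matrix viewed as a complex matrix. -/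
def cm {a b : Type*} (X : Matrix a b ℝ) : Matrix a b ℂ :=
  X.map Complex.ofReal

section Transfer

variable {a b c : Type*}

@[simp] lemma cm_add (X Y : Matrix a b ℝ) : cm (X + Y) = cm X + cm Y :=
  Matrix.map_add _ Complex.ofReal_add X Y

@[simp] lemma cm_sub (X Y : Matrix a b ℝ) : cm (X - Y) = cm X - cm Y :=
  Matrix.map_sub _ Complex.ofReal_sub X Y

@[simp] lemma cm_mul [Fintype b] (X : Matrix a b ℝ) (Y : Matrix b c ℝ) :
    cm (X * Y) = cm X * cm Y :=
  Matrix.map_mul (f := Complex.ofRealHom)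

@[simp] lemma cm_one [DecidableEq a] : cm (1 : Matrix a a ℝ) = 1 :=
  Matrix.map_one _ Complex.ofReal_zero Complex.ofReal_one

@[simp] lemma cm_transpose (X : Matrix a b ℝ) : cm Xᵀ = (cm X)ᴴ := by
  ext i j
  simp [cm]

lemma transpose_cm (X : Matrix a b ℝ) : (cm X)ᵀ = (cm X)ᴴ := cm_transpose X

end Transfer

section Factorization

variable {K : Type*} {n p : Type*} [Fintype n] [Fintype p] [DecidableEq p]

lemma one_add_mul_mul_conjTranspose_eq_of_mul_eq [Ring K] [StarRing K]
    {A G P : Matrix n n K} {C M : Matrix p n K} {F : Matrix n p K} {R : Matrix p p K}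
    (hMG : M * G = C) (hR : C * P * Cᴴ = R - 1) (hFR : F * R = A * P * Cᴴ)
    (hRF : R * Fᴴ = C * P * Aᴴ) :
    (1 + M * F) * R * (1 + M * F)ᴴ =
      1 + M * (G * P * Gᴴ + G * P * Aᴴ + A * P * Gᴴ + F * R * Fᴴ) * Mᴴ := by
  have hGG : M * (G * P * Gᴴ) * Mᴴ = R - 1 := by
    rw [← hR, ← hMG, conjTranspose_mul]; simp only [Matrix.mul_assoc]
  have hGA : M * (G * P * Aᴴ) * Mᴴ = R * Fᴴ * Mᴴ := by
    rw [hRF, ← hMG]; simp only [Matrix.mul_assoc]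
  have hAG : M * (A * P * Gᴴ) * Mᴴ = M * F * R := by
    rw [Matrix.mul_assoc M F, hFR, ← hMG, conjTranspose_mul]; simp only [Matrix.mul_assoc]
  simp only [Matrix.mul_add, Matrix.add_mul, hGG, hGA, hAG]
  simp only [conjTranspose_add, conjTranspose_one, conjTranspose_mul, Matrix.mul_add,
    Matrix.mul_assoc, Matrix.one_mul, Matrix.mul_one]
  abel

lemma sub_mul_mul_conjTranspose_eq [DecidableEq n] [CommRing K] [StarRing K] {z : K}
    (hz : star z * z = 1) (A P : Matrix n n K) :
    P - A * P * Aᴴ =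
      (z • 1 - A) * P * (z • 1 - A)ᴴ + (z • 1 - A) * P * Aᴴ + A * P * (z • 1 - A)ᴴ := by
  simp only [conjTranspose_sub, conjTranspose_smul, conjTranspose_one, Matrix.sub_mul,
    Matrix.mul_sub, Matrix.smul_mul, Matrix.mul_smul, Matrix.one_mul, Matrix.mul_one, smul_smul,
    hz, one_smul, smul_sub]
  abel

theorem spectral_factorization_of_riccati [DecidableEq n] [CommRing K] [StarRing K] {z : K}
    (hz : star z * z = 1) {A P Q : Matrix n n K} {C : Matrix p n K} {F : Matrix n p K}
    {R : Matrix p p K} (hR : C * P * Cᴴ = R - 1) (hFR : F * R = A * P * Cᴴ)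
    (hRF : R * Fᴴ = C * P * Aᴴ) (hQ : Q = P - A * P * Aᴴ + F * R * Fᴴ)
    (hG : IsUnit (z • 1 - A).det) :
    (1 + C * (z • 1 - A)⁻¹ * F) * R * (1 + C * (z • 1 - A)⁻¹ * F)ᴴ =
      1 + C * (z • 1 - A)⁻¹ * Q * ((z • 1 - A)⁻¹)ᴴ * Cᴴ := by
  have hMG : C * (z • 1 - A)⁻¹ * (z • 1 - A) = C := nonsing_inv_mul_cancel_right _ _ hG
  rw [one_add_mul_mul_conjTranspose_eq_of_mul_eq hMG hR hFR hRF, hQ,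
    sub_mul_mul_conjTranspose_eq hz, conjTranspose_mul, ← Matrix.mul_assoc]

theorem one_add_mul_inv_mul_mul_one_sub_eq_one [CommRing K] [DecidableEq n] {G : Matrix n n K}
    {C : Matrix p n K} {F : Matrix n p K} (hG : IsUnit G.det) (hH : IsUnit (G + F * C).det) :
    (1 + C * G⁻¹ * F) * (1 - C * (G + F * C)⁻¹ * F) = 1 := by
  have hpush : (1 + C * G⁻¹ * F) * C = C * G⁻¹ * (G + F * C) := by
    rw [Matrix.add_mul, Matrix.one_mul, Matrix.mul_add, nonsing_inv_mul_cancel_right _ _ hG,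
      Matrix.mul_assoc _ F C]
  calc (1 + C * G⁻¹ * F) * (1 - C * (G + F * C)⁻¹ * F)
      = 1 + C * G⁻¹ * F - (1 + C * G⁻¹ * F) * C * (G + F * C)⁻¹ * F := by
        simp only [Matrix.mul_sub, Matrix.mul_one, Matrix.mul_assoc]
    _ = 1 := by
        rw [hpush, mul_nonsing_inv_cancel_right _ _ hH]
        simp only [Matrix.mul_assoc, add_sub_cancel_right]

end Factorization

lemma isUnit_det_one_add_mul_mul_transpose {n p : Type*} [Fintype n] [Fintype p] [DecidableEq p]
    {P : Matrix n n ℝ} (hP : P.PosSemidef) (C : Matrix p n ℝ) : IsUnit (1 + C * P * Cᵀ).det := by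
  have hPD : (1 + C * P * Cᴴ).PosDef :=
    PosDef.one.add_posSemidef (hP.mul_mul_conjTranspose_same C)
  rw [conjTranspose_eq_transpose_of_trivial] at hPD
  exact hPD.det_pos.ne'.isUnit

/-- Pointwise spectral factorization from the discrete algebraic Riccati equation,
with `R = I + C P Cᵀ` and `F = A P Cᵀ R⁻¹`. -/
theorem stmt_15 {n m p : ℕ} (A : Matrix (Fin n) (Fin n) ℝ) (B : Matrix (Fin n) (Fin m) ℝ)
    (C : Matrix (Fin p) (Fin n) ℝ) (P : Matrix (Fin n) (Fin n) ℝ) (hP : P.PosSemidef)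
    (R : Matrix (Fin p) (Fin p) ℝ) (hR : R = 1 + C * P * Cᵀ)
    (F : Matrix (Fin n) (Fin p) ℝ) (hF : F = A * P * Cᵀ * R⁻¹)
    (hDARE : P = A * P * Aᵀ + B * Bᵀ - F * R * Fᵀ) :
    (∀ z : ℂ, ‖z‖ = 1 →
      IsUnit (z • (1 : Matrix (Fin n) (Fin n) ℂ) - cm A).det →
      ((1 : Matrix (Fin p) (Fin p) ℂ) + cm C * (z • 1 - cm A)⁻¹ * cm F) * cm R *
          ((1 : Matrix (Fin p) (Fin p) ℂ) + cm C * (z • 1 - cm A)⁻¹ * cm F)ᴴ =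
        (1 : Matrix (Fin p) (Fin p) ℂ) +
          cm C * (z • 1 - cm A)⁻¹ * cm B * (cm B)ᵀ * ((z • 1 - cm A)⁻¹)ᴴ * (cm C)ᵀ) ∧
    (∀ z : ℂ,
      IsUnit (z • (1 : Matrix (Fin n) (Fin n) ℂ) - cm A).det →
      IsUnit (z • (1 : Matrix (Fin n) (Fin n) ℂ) - (cm A - cm F * cm C)).det →
      ((1 : Matrix (Fin p) (Fin p) ℂ) + cm C * (z • 1 - cm A)⁻¹ * cm F) *
          ((1 : Matrix (Fin p) (Fin p) ℂ) -
            cm C * (z • 1 - (cm A - cm F * cm C))⁻¹ * cm F) = 1) := by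
  have hPt : Pᵀ = P := hP.isHermitian.eq
  have hFR : F * R = A * P * Cᵀ :=
    hF ▸ nonsing_inv_mul_cancel_right _ _ (hR ▸ isUnit_det_one_add_mul_mul_transpose hP C)
  have hRF : R * Fᵀ = C * P * Aᵀ := by
    have hRt : Rᵀ = R := by simp [hR, Matrix.mul_assoc, hPt]
    simpa [hRt, hPt, Matrix.mul_assoc] using congrArg transpose hFR
  have hBB : B * Bᵀ = P - A * P * Aᵀ + F * R * Fᵀ := by nth_rewrite 1 [hDARE]; abel
  constructor
  · intro z hz hG
    have hz' : star z * z = 1 := by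
      rw [RCLike.star_def, RCLike.conj_mul, hz]; norm_num
    rw [transpose_cm, transpose_cm, Matrix.mul_assoc (cm C * _) (cm B)]
    exact spectral_factorization_of_riccati (P := cm P) hz' (by simp [hR])
      (by simpa using congrArg cm hFR) (by simpa using congrArg cm hRF)
      (by simpa using congrArg cm hBB) hG
  · intro z hG hH
    rw [← sub_add] at hH ⊢
    exact one_add_mul_inv_mul_mul_one_sub_eq_one hG hH
end
end

section
/- The strictly anticausal part of the product of a causal function with a rational strictly anticausal function is rational: Let Ā ∈ ℂ^{n×n} have spectral radius strictly less than 1, let B̄ ∈ ℂ^{n×m} and C̄ ∈ ℂ^{p×n}, and define S(θ) := C̄ (e^{−iθ} I − Ā)⁻¹ B̄ for θ ∈ ℝ. Let U : ℝ → ℂ^{s×p} be continuous and 2π-periodic with (1/2π)∫₀^{2π} U(θ) e^{−ikθ} dθ = 0 for every integer k ≥ 1 (i.e., U is causal: its Fourier coefficients at strictly positive frequencies vanish). Define Γ := (1/2π)∫₀^{2π} U(θ) C̄ (I − e^{iθ} Ā)⁻¹ dθ ∈ ℂ^{s×n}. Then for every integer k ≥ 1: (1/2π)∫₀^{2π} U(θ)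 S(θ) e^{−ikθ} dθ = Γ Ā^{k−1} B̄. Equivalently, the strictly anticausal part of the product U·S is the rational function θ ↦ Γ (e^{−iθ} I − Ā)⁻¹ B̄. -/
/-!
Write `z = e^{iθ}`, so that `e^{-ikθ} S(θ) = C̄ z^{-(k-1)} (I - zĀ)⁻¹ B̄`. The finite geometric
expansion `(I - zĀ)⁻¹ = ∑_{j<k-1} z^j Ā^j + z^{k-1} (I - zĀ)⁻¹ Ā^{k-1}` (no convergence needed)
splits `U S e^{-ikθ}` into terms `U(θ) z^{-(k-1-j)} C̄ Ā^j B̄` with `k-1-j ≥ 1`, whose integrals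
vanish by causality of `U`, plus `U(θ) C̄ (I - zĀ)⁻¹ Ā^{k-1} B̄`, whose mean is `Γ Ā^{k-1} B̄`.
-/

open Matrix MeasureTheory

theorem spectrum.isUnit_one_sub_smul_of_norm_le_one {𝕜 A : Type*} [NormedField 𝕜] [Ring A]
    [Algebra 𝕜 A] {a : A} (ha : ∀ μ ∈ spectrum 𝕜 a, ‖μ‖ < 1) {z : 𝕜} (hz : ‖z‖ ≤ 1) :
    IsUnit (1 - z • a) := by
  rcases eq_or_ne z 0 with rfl | hz0
  · simp
  let u := Units.mk0 z hz0
  suffices hu : IsUnit (u⁻¹ • (1 : A) - a) by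
    rwa [IsUnit.smul_sub_iff_sub_inv_smul, inv_inv u] at hu
  rw [Units.smul_def, ← Algebra.algebraMap_eq_smul_one, ← spectrum.notMem_iff]
  intro hmem
  have hlt := ha _ hmem
  rw [Units.val_inv_eq_inv_val, Units.val_mk0, norm_inv] at hlt
  exact ((one_le_inv₀ (norm_pos_iff.2 hz0)).2 hz).not_gt hlt

namespace Matrix

variable {ι R : Type*} [Fintype ι] [DecidableEq ι]

theorem inv_one_sub_eq_geom_sum_add [CommRing R] (X : Matrix ι ι R) (h : IsUnit (1 - X).det)
    (K : ℕ) : (1 - X)⁻¹ = ∑ j ∈ Finset.range K, X ^ j + (1 - X)⁻¹ * X ^ K := by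
  refine inv_eq_left_inv ?_
  have hcomm : Commute (1 - X) (X ^ K) :=
    ((Commute.one_left X).sub_left (Commute.refl X)).pow_right K
  rw [add_mul, geom_sum_mul_neg, mul_assoc, ← hcomm.eq, ← mul_assoc, nonsing_inv_mul _ h,
    one_mul, sub_add_cancel]

theorem inv_inv_smul_one_sub [Field R] (A : Matrix ι ι R) {c : R} (hc : c ≠ 0)
    (h : IsUnit (1 - c • A).det) : (c⁻¹ • (1 : Matrix ι ι R) - A)⁻¹ = c • (1 - c • A)⁻¹ := by
  refine inv_eq_left_inv ?_
  rw [show c⁻¹ • (1 : Matrix ι ι R) - A = c⁻¹ • (1 - c • A) by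
      rw [smul_sub, smul_smul, inv_mul_cancel₀ hc, one_smul],
    smul_mul_smul_comm, mul_inv_cancel₀ hc, one_smul, nonsing_inv_mul _ h]

theorem pow_succ_smul_inv_inv_smul_one_sub [Field R] (A : Matrix ι ι R) {c : R} (hc : c ≠ 0)
    (h : IsUnit (1 - c • A).det) (K : ℕ) :
    c⁻¹ ^ (K + 1) • (c⁻¹ • (1 : Matrix ι ι R) - A)⁻¹ =
      ∑ j ∈ Finset.range K, c⁻¹ ^ (K - j) • A ^ j + (1 - c • A)⁻¹ * A ^ K := by
  have hpow : ∀ j ≤ K, c⁻¹ ^ K * c ^ j = c⁻¹ ^ (K - j) := fun j hj => by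
    obtain ⟨d, rfl⟩ := Nat.exists_eq_add_of_le hj
    rw [Nat.add_sub_cancel_left, pow_add, mul_right_comm, ← mul_pow, inv_mul_cancel₀ hc,
      one_pow, one_mul]
  rw [inv_inv_smul_one_sub A hc h, smul_smul, pow_succ, mul_assoc, inv_mul_cancel₀ hc, mul_one]
  conv_lhs => rw [inv_one_sub_eq_geom_sum_add _ h K]
  rw [smul_add, Finset.smul_sum]
  congr 1
  · refine Finset.sum_congr rfl fun j hj => ?_
    rw [smul_pow, smul_smul, hpow j (Finset.mem_range.1 hj).le]
  · rw [smul_pow, mul_smul_comm, smul_smul, hpow K le_rfl, Nat.sub_self, pow_zero, one_smul]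

theorem continuous_inv_one_sub_smul {𝕜 X : Type*} [NormedField 𝕜] [TopologicalSpace X]
    {A : Matrix ι ι 𝕜} (hA : ∀ μ ∈ spectrum 𝕜 A, ‖μ‖ < 1) {z : X → 𝕜} (hz : Continuous z)
    (hz1 : ∀ x, ‖z x‖ ≤ 1) : Continuous fun x => (1 - z x • A)⁻¹ := by
  refine continuous_iff_continuousAt.2 fun x => ContinuousAt.comp ?_
    (continuous_const.sub (hz.smul continuous_const)).continuousAt
  refine continuousAt_matrix_inv _ ?_
  rw [Ring.inverse_eq_inv']
  exact continuousAt_inv₀ ((isUnit_iff_isUnit_det _).1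
    (spectrum.isUnit_one_sub_smul_of_norm_le_one hA (hz1 x))).ne_zero

end Matrix

theorem intervalIntegral.integral_mul_const_matrix_apply {𝕜 ι κ ν : Type*} [RCLike 𝕜]
    [Fintype κ] {G : ℝ → Matrix ι κ 𝕜} {a b : ℝ}
    (hG : ∀ i c, IntervalIntegrable (fun θ => G θ i c) volume a b) (N : Matrix κ ν 𝕜)
    (i : ι) (j : ν) :
    ∫ θ in a..b, (G θ * N) i j = ∑ c, (∫ θ in a..b, G θ i c) * N c j := by
  simp only [mul_apply]
  rw [intervalIntegral.integral_finsetSum fun c _ => (hG i c).mul_const _]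
  simp only [intervalIntegral.integral_mul_const]

theorem Complex.exp_neg_nat_mul_ofReal_mul_I (k : ℕ) (θ : ℝ) :
    exp (-(k : ℂ) * θ * I) = (exp (θ * I))⁻¹ ^ k := by
  rw [← exp_neg, ← exp_nat_mul]
  ring_nf

theorem integral_mul_const_apply_mul_exp_eq_zero_of_causal {ι κ ν : Type*} [Fintype κ]
    {U : ℝ → Matrix ι κ ℂ} (hU : Continuous U)
    (hUcausal : ∀ k : ℕ, 1 ≤ k → ∀ a b,
      (∫ θ in (0 : ℝ)..(2 * Real.pi),
        U θ a b * Complex.exp (-(k : ℂ) * (θ : ℂ) * Complex.I)) = 0)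
    {k : ℕ} (hk : 1 ≤ k) (N : Matrix κ ν ℂ) (a : ι) (b : ν) :
    ∫ θ in (0 : ℝ)..(2 * Real.pi), (U θ * N) a b * Complex.exp (-(k : ℂ) * θ * Complex.I) = 0 := by
  simp only [mul_apply, Finset.sum_mul]
  rw [intervalIntegral.integral_finsetSum fun c _ =>
    Continuous.intervalIntegrable (by fun_prop) _ _]
  refine Finset.sum_eq_zero fun c _ => ?_
  simp only [mul_right_comm _ (N c b)]
  rw [intervalIntegral.integral_mul_const, hUcausal k hk, zero_mul]

theorem stmt_16_general {n m p s : ℕ}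
    (Abar : Matrix (Fin n) (Fin n) ℂ)
    (hA : ∀ μ ∈ spectrum ℂ Abar, ‖μ‖ < 1)
    (Bbar : Matrix (Fin n) (Fin m) ℂ) (Cbar : Matrix (Fin p) (Fin n) ℂ)
    (U : ℝ → Matrix (Fin s) (Fin p) ℂ) (hUcont : Continuous U)
    (hUcausal : ∀ k : ℕ, 1 ≤ k → ∀ a b,
      (∫ θ in (0 : ℝ)..(2 * Real.pi),
        U θ a b * Complex.exp (-(k : ℂ) * (θ : ℂ) * Complex.I)) = 0)
    (Γ : Matrix (Fin s) (Fin n) ℂ)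
    (hΓ : ∀ a b, Γ a b = (1 / (2 * (Real.pi : ℂ))) *
      ∫ θ in (0 : ℝ)..(2 * Real.pi),
        (U θ * (Cbar * ((1 : Matrix (Fin n) (Fin n) ℂ)
          - Complex.exp ((θ : ℂ) * Complex.I) • Abar)⁻¹)) a b) :
    ∀ k : ℕ, 1 ≤ k → ∀ a b,
      (1 / (2 * (Real.pi : ℂ))) *
          (∫ θ in (0 : ℝ)..(2 * Real.pi),
            (U θ * (Cbar * (Complex.exp (-(θ : ℂ) * Complex.I) •
                (1 : Matrix (Fin n) (Fin n) ℂ) - Abar)⁻¹ * Bbar)) a b *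
              Complex.exp (-(k : ℂ) * (θ : ℂ) * Complex.I)) =
        (Γ * Abar ^ (k - 1) * Bbar) a b := by
  intro k hk a b
  obtain ⟨K, rfl⟩ := Nat.exists_eq_add_of_le' hk
  have hz1 : ∀ θ : ℝ, ‖Complex.exp (θ * Complex.I)‖ ≤ 1 :=
    fun θ => (Complex.norm_exp_ofReal_mul_I θ).le
  set G : ℝ → Matrix (Fin s) (Fin n) ℂ :=
    fun θ => U θ * (Cbar * (1 - Complex.exp (θ * Complex.I) • Abar)⁻¹)
  have hG : Continuous G := hUcont.matrix_mul
    (continuous_const.matrix_mul (continuous_inv_one_sub_smul hA (by fun_prop) hz1))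
  have hexpand : ∀ θ : ℝ,
      (U θ * (Cbar * (Complex.exp (-(θ : ℂ) * Complex.I) • 1 - Abar)⁻¹ * Bbar)) a b *
          Complex.exp (-((K + 1 : ℕ) : ℂ) * θ * Complex.I) =
        ∑ j ∈ Finset.range K, (U θ * (Cbar * (Abar ^ j * Bbar))) a b *
            Complex.exp (-((K - j : ℕ) : ℂ) * θ * Complex.I) +
          (G θ * (Abar ^ K * Bbar)) a b := by
    intro θ
    have hdet := (isUnit_iff_isUnit_det _).1
      (spectrum.isUnit_one_sub_smul_of_norm_le_one hA (hz1 θ))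
    simp only [neg_mul (θ : ℂ), Complex.exp_neg, Complex.exp_neg_nat_mul_ofReal_mul_I]
    rw [mul_comm, ← smul_eq_mul, ← Matrix.smul_apply, ← Matrix.mul_smul, ← Matrix.smul_mul,
      ← Matrix.mul_smul, pow_succ_smul_inv_inv_smul_one_sub Abar (Complex.exp_ne_zero _) hdet K]
    simp only [G, Matrix.mul_add, Matrix.add_mul, Matrix.mul_sum, Matrix.sum_mul,
      Matrix.mul_smul, Matrix.smul_mul, Matrix.add_apply, Matrix.sum_apply, Matrix.smul_apply,
      smul_eq_mul, Matrix.mul_assoc]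
    exact congrArg (· + _) (Finset.sum_congr rfl fun j _ => mul_comm _ _)
  have hterm : ∀ j, Continuous fun θ : ℝ => (U θ * (Cbar * (Abar ^ j * Bbar))) a b *
      Complex.exp (-((K - j : ℕ) : ℂ) * θ * Complex.I) := fun j => by fun_prop
  rw [intervalIntegral.integral_congr fun θ _ => hexpand θ,
    intervalIntegral.integral_add
      ((continuous_finsetSum _ fun j _ => hterm j).intervalIntegrable _ _)
      (((hG.matrix_mul continuous_const).matrix_elem a b).intervalIntegrable _ _),
    intervalIntegral.integral_finsetSum fun j _ => (hterm j).intervalIntegrable _ _,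
    Finset.sum_eq_zero fun j hj => integral_mul_const_apply_mul_exp_eq_zero_of_causal hUcont
      hUcausal (Nat.sub_pos_of_lt (Finset.mem_range.1 hj)) _ a b,
    zero_add, intervalIntegral.integral_mul_const_matrix_apply
      fun i c => (hG.matrix_elem i c).intervalIntegrable _ _,
    Nat.add_sub_cancel, Matrix.mul_assoc, mul_apply, Finset.mul_sum]
  exact Finset.sum_congr rfl fun c _ => by rw [hΓ, mul_assoc]

/-- The strictly anticausal part of the product of a causal function with a rational
strictly anticausal function is rational: for every `k ≥ 1`, the `k`-th positive-frequency
Fourier coefficient of `θ ↦ U(θ)·S(θ)`, with `S(θ) = C̄(e^{−iθ}I − Ā)⁻¹B̄`, equals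
`Γ Ā^{k−1} B̄` where `Γ = (1/2π)∫ U(θ) C̄ (I − e^{iθ}Ā)⁻¹ dθ`. -/
theorem stmt_16 {n m p s : ℕ}
    (Abar : Matrix (Fin n) (Fin n) ℂ)
    (hA : ∀ μ ∈ spectrum ℂ Abar, ‖μ‖ < 1)
    (Bbar : Matrix (Fin n) (Fin m) ℂ) (Cbar : Matrix (Fin p) (Fin n) ℂ)
    (U : ℝ → Matrix (Fin s) (Fin p) ℂ) (hUcont : Continuous U)
    (hUper : Function.Periodic U (2 * Real.pi))
    (hUcausal : ∀ k : ℕ, 1 ≤ k → ∀ a b,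
      (∫ θ in (0 : ℝ)..(2 * Real.pi),
        U θ a b * Complex.exp (-(k : ℂ) * (θ : ℂ) * Complex.I)) = 0)
    (Γ : Matrix (Fin s) (Fin n) ℂ)
    (hΓ : ∀ a b, Γ a b = (1 / (2 * (Real.pi : ℂ))) *
      ∫ θ in (0 : ℝ)..(2 * Real.pi),
        (U θ * (Cbar * ((1 : Matrix (Fin n) (Fin n) ℂ)
          - Complex.exp ((θ : ℂ) * Complex.I) • Abar)⁻¹)) a b) :
    ∀ k : ℕ, 1 ≤ k → ∀ a b,
      (1 / (2 * (Real.pi : ℂ))) *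
          (∫ θ in (0 : ℝ)..(2 * Real.pi),
            (U θ * (Cbar * (Complex.exp (-(θ : ℂ) * Complex.I) •
                (1 : Matrix (Fin n) (Fin n) ℂ) - Abar)⁻¹ * Bbar)) a b *
              Complex.exp (-(k : ℂ) * (θ : ℂ) * Complex.I)) =
        (Γ * Abar ^ (k - 1) * Bbar) a b :=
  stmt_16_general Abar hA Bbar Cbar U hUcont hUcausal Γ hΓ
end

section
/- Rational spectral factorization of a positive rational trigonometric density: Let P and Q be symmetric Laurent polynomials of degree at most m with P(z) > 0 and Q(z) > 0 for all z ∈ 𝕋. Then there exist complex polynomials a and b of degree at most m, each nonvanishing on the closed unit disk {z ∈ ℂ : |z| ≤ 1}, such that for all z ∈ 𝕋: P(z)/Q(z) = (a(z) · conj(a(z))) / (b(z) · conj(b(z))), where conj denotes complex conjugation of the value. In other words, the positive rational spectral density P/Q admits a rational spectral factor U(z) = a(z)/b(z) with P(z)/Q(z) = |U(z)|² on 𝕋 and with both U and 1/U having no poles in the closed unit disk. -/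
/-!
Clearing denominators, `R(z) = z ^ m P(z)` is a polynomial of degree at most `2m` with real
coefficients and `X ^ (2m) R(1/X) = R`, so the inversion `w ↦ 1 / conj w` in the unit circle
permutes its roots with multiplicities; no root lies on the circle since `P > 0` there.
For `|z| = 1` we have `|z - 1 / conj w| * |w| = |z - w|`, so pairing each root `w` outside the
closed disk with `1 / conj w` (the roots at `0` contribute factors of modulus one) gives
`P(z) = |R(z)| = K |A(z)|²` on the circle, with `A = ∏ (X - w)` over the outer roots and `K > 0`.
Then `√K • A` factors `P`, and the factorizations of `P` and `Q` are divided.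
-/

noncomputable section

open Polynomial ComplexConjugate

theorem Polynomial.reflect_sum {R ι : Type*} [Semiring R] (N : ℕ) (s : Finset ι) (f : ι → R[X]) :
    (∑ i ∈ s, f i).reflect N = ∑ i ∈ s, (f i).reflect N :=
  map_sum (⟨⟨reflect N, reflect_zero⟩, fun f g => reflect_add f g N⟩ : R[X] →+ R[X]) f s

theorem Polynomial.reflect_pow {R : Type*} [CommSemiring R] {f : R[X]} {n : ℕ}
    (hf : f.natDegree ≤ n) (k : ℕ) : (f ^ k).reflect (k * n) = f.reflect n ^ k := by
  induction k with
  | zero => simp [reflect_one]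
  | succ k ih =>
    rw [pow_succ, pow_succ, Nat.succ_mul,
      reflect_mul _ _ (natDegree_pow_le_of_le k hf) hf, ih]

theorem Polynomial.reflect_X_sub_C {K : Type*} [Field K] {w : K} (hw : w ≠ 0) :
    (X - C w).reflect 1 = C (-w) * (X - C w⁻¹) := by
  have hX : (X : K[X]).reflect 1 = 1 := by simp
  have hC : C w * C w⁻¹ = 1 := by rw [← C_mul, mul_inv_cancel₀ hw, C_1]
  rw [reflect_sub, hX, reflect_C, pow_one, C_neg]
  linear_combination -hC

theorem Polynomial.rootMultiplicity_le_rootMultiplicity_inv_of_reflect_eq {K : Type*} [Field K]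
    {R : K[X]} {N : ℕ} (hdeg : R.natDegree ≤ N) (hrefl : R.reflect N = R) {w : K} (hw : w ≠ 0) :
    R.rootMultiplicity w ≤ R.rootMultiplicity w⁻¹ := by
  rcases eq_or_ne R 0 with rfl | hR
  · simp
  obtain ⟨g, hg⟩ := pow_rootMultiplicity_dvd R w
  set k := R.rootMultiplicity w
  have hg0 : g ≠ 0 := by rintro rfl; simp [hg] at hR
  have hdeg' : k + g.natDegree ≤ N := by
    rwa [hg, natDegree_mul (pow_ne_zero _ (X_sub_C_ne_zero w)) hg0, natDegree_pow,
      natDegree_X_sub_C, mul_one] at hdeg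
  have hR_eq : R = (C (-w) * (X - C w⁻¹)) ^ k * g.reflect (N - k) := by
    conv_lhs => rw [← hrefl, hg, show N = k * 1 + (N - k) by omega]
    rw [reflect_mul _ _ (natDegree_pow_le_of_le k (natDegree_X_sub_C_le w)) (by omega),
      reflect_pow (natDegree_X_sub_C_le w), reflect_X_sub_C hw]
  rw [le_rootMultiplicity_iff hR, hR_eq, mul_pow]
  exact dvd_mul_of_dvd_left (dvd_mul_left _ _) _

theorem Polynomial.rootMultiplicity_inv_of_reflect_eq {K : Type*} [Field K]
    {R : K[X]} {N : ℕ} (hdeg : R.natDegree ≤ N) (hrefl : R.reflect N = R) (w : K) :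
    R.rootMultiplicity w⁻¹ = R.rootMultiplicity w := by
  rcases eq_or_ne w 0 with rfl | hw
  · simp
  refine le_antisymm ?_ (rootMultiplicity_le_rootMultiplicity_inv_of_reflect_eq hdeg hrefl hw)
  simpa using rootMultiplicity_le_rootMultiplicity_inv_of_reflect_eq hdeg hrefl (inv_ne_zero hw)

namespace Complex

def circleInversion (w : ℂ) : ℂ := (conj w)⁻¹

@[simp]
theorem circleInversion_circleInversion (w : ℂ) : circleInversion (circleInversion w) = w := by
  simp [circleInversion]

@[simp]
theorem norm_circleInversion (w : ℂ) : ‖circleInversion w‖ = ‖w‖⁻¹ := by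
  simp [circleInversion]

theorem norm_sub_circleInversion_mul_norm {z : ℂ} (hz : ‖z‖ = 1) {w : ℂ} (hw : w ≠ 0) :
    ‖z - circleInversion w‖ * ‖w‖ = ‖z - w‖ := by
  have hzz : z * conj z = 1 := by simp [mul_conj, normSq_eq_norm_sq, hz]
  calc ‖z - circleInversion w‖ * ‖w‖ = ‖(z - circleInversion w) * conj w‖ := by simp
    _ = ‖z * (conj w - conj z)‖ := by
        congr 1
        rw [circleInversion, sub_mul, inv_mul_cancel₀ ((_root_.map_ne_zero _).mpr hw), mul_sub, hzz]
    _ = ‖z - w‖ := by rw [norm_mul, hz, one_mul, ← map_sub, norm_conj, norm_sub_rev]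

theorem count_roots_circleInversion {R : ℂ[X]} {N : ℕ}
    (hdeg : R.natDegree ≤ N) (hconj : R.map (starRingEnd ℂ) = R) (hrefl : R.reflect N = R)
    (w : ℂ) : R.roots.count (circleInversion w) = R.roots.count w := by
  rw [count_roots, count_roots, circleInversion, rootMultiplicity_inv_of_reflect_eq hdeg hrefl,
    eq_rootMultiplicity_map (RingHom.injective (starRingEnd ℂ)) w, hconj]

theorem eq_filter_add_map_circleInversion_add_filter_eq_zero {T : Multiset ℂ}
    (hT : ∀ w, T.count (circleInversion w) = T.count w) (hcircle : ∀ w ∈ T, ‖w‖ ≠ 1) :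
    T = T.filter (1 < ‖·‖) + (T.filter (1 < ‖·‖)).map circleInversion + T.filter (· = 0) := by
  ext a
  have hmap : ((T.filter (1 < ‖·‖)).map circleInversion).count a
      = (T.filter (1 < ‖·‖)).count (circleInversion a) := by
    simpa using Multiset.count_map_eq_count' circleInversion (T.filter (1 < ‖·‖))
      (Function.Involutive.injective circleInversion_circleInversion) (circleInversion a)
  rw [Multiset.count_add, Multiset.count_add, hmap, Multiset.count_filter, Multiset.count_filter,
    Multiset.count_filter, hT, norm_circleInversion]
  clear hmap
  by_cases ha : a ∈ T
  · rcases eq_or_ne a 0 with rfl | ha0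
    · simp
    have ha1 := hcircle a ha
    have := norm_pos_iff.2 ha0
    rcases lt_or_gt_of_ne ha1 with h | h
    · simp [ha0, h.not_gt, one_lt_inv_iff₀, this, h]
    · simp [ha0, h, one_lt_inv_iff₀, h.le.not_gt]
  · simp [Multiset.count_eq_zero_of_notMem ha]

theorem norm_eval_eq_of_roots_eq {R : ℂ[X]} {S Z : Multiset ℂ}
    (hroots : R.roots = S + S.map circleInversion + Z) (hS : ∀ w ∈ S, w ≠ 0)
    (hZ : ∀ w ∈ Z, w = 0) {z : ℂ} (hz : ‖z‖ = 1) :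
    ‖eval z R‖ = ‖R.leadingCoeff‖ / (S.map (‖·‖)).prod * ‖eval z (S.map (X - C ·)).prod‖ ^ 2 := by
  have hnorm (s : Multiset ℂ) : ‖s.prod‖ = (s.map (‖·‖)).prod := map_multiset_prod normHom s
  have hZ1 : ((Z.map (z - ·)).map (‖·‖)).prod = 1 :=
    Multiset.prod_eq_one fun x hx => by
      obtain ⟨w, hw, rfl⟩ := by simpa using hx
      simp [hZ w hw, hz]
  have hσ : ((S.map circleInversion).map (z - ·)).map (‖·‖) = S.map fun w => ‖z - w‖ / ‖w‖ := by
    simp only [Multiset.map_map]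
    refine Multiset.map_congr rfl fun w hw => ?_
    simp only [Function.comp_apply]
    rw [eq_div_iff (norm_ne_zero_iff.2 (hS w hw)), norm_sub_circleInversion_mul_norm hz (hS w hw)]
  rw [(IsAlgClosed.splits R).eval_eq_prod_roots, hroots, eval_multiset_prod, norm_mul, hnorm, hnorm,
    Multiset.map_add, Multiset.map_add, Multiset.map_add, Multiset.map_add, Multiset.prod_add,
    Multiset.prod_add, hZ1, hσ, Multiset.prod_map_div]
  simp only [Multiset.map_map, Function.comp_apply, eval_sub, eval_X, eval_C]
  ring

theorem exists_natDegree_le_norm_eval_eq_sq {R : ℂ[X]} {m : ℕ} (hdeg : R.natDegree ≤ 2 * m)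
    (hconj : R.map (starRingEnd ℂ) = R) (hrefl : R.reflect (2 * m) = R)
    (hcircle : ∀ z : ℂ, ‖z‖ = 1 → eval z R ≠ 0) :
    ∃ a : ℂ[X], a.natDegree ≤ m ∧ (∀ z : ℂ, ‖z‖ ≤ 1 → eval z a ≠ 0) ∧
      ∀ z : ℂ, ‖z‖ = 1 → ‖eval z R‖ = ‖eval z a‖ ^ 2 := by
  have hR : R ≠ 0 := fun h => hcircle 1 (by simp) (by simp [h])
  have hroots := eq_filter_add_map_circleInversion_add_filter_eq_zero
    (count_roots_circleInversion hdeg hconj hrefl)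
    (fun w hw h => hcircle w h (isRoot_of_mem_roots hw))
  set S := R.roots.filter (1 < ‖·‖)
  have hS : ∀ w ∈ S, 1 < ‖w‖ := fun w hw => (Multiset.mem_filter.1 hw).2
  have hcard : 2 * Multiset.card S ≤ 2 * m := by
    have hsplit := congrArg Multiset.card hroots
    simp only [Multiset.card_add, Multiset.card_map] at hsplit
    have hle := card_roots' R
    omega
  set K := ‖R.leadingCoeff‖ / (S.map (‖·‖)).prod
  have hK : 0 < K := div_pos (norm_pos_iff.2 (leadingCoeff_ne_zero.2 hR))
    (Multiset.prod_pos fun x hx => by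
      obtain ⟨w, hw, rfl⟩ := Multiset.mem_map.1 hx
      exact one_pos.trans (hS w hw))
  refine ⟨C (√K : ℂ) * (S.map (X - C ·)).prod, ?_, ?_, ?_⟩
  · refine (natDegree_C_mul_le _ _).trans ?_
    rw [natDegree_multiset_prod_X_sub_C_eq_card]
    omega
  · intro z hz
    simp only [eval_mul, eval_C, eval_multiset_prod, Multiset.map_map, Function.comp_apply,
      eval_sub, eval_X]
    refine mul_ne_zero (by exact_mod_cast (Real.sqrt_pos.2 hK).ne') (Multiset.prod_ne_zero ?_)
    intro h0
    obtain ⟨w, hw, hzw⟩ := Multiset.mem_map.1 h0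
    rw [sub_eq_zero.1 hzw] at hz
    exact (hS w hw).not_ge hz
  · intro z hz
    rw [norm_eval_eq_of_roots_eq hroots (fun w hw => norm_pos_iff.1 (one_pos.trans (hS w hw)))
      (fun w hw => (Multiset.mem_filter.1 hw).2) hz, eval_mul, eval_C, norm_mul, mul_pow,
      norm_real, Real.norm_of_nonneg (Real.sqrt_nonneg K), Real.sq_sqrt hK.le]

end Complex

def lNumerator (m : ℕ) (p : Fin (m + 1) → ℝ) : ℂ[X] :=
  ∑ k : Fin (m + 1), C (p k : ℂ) * (X ^ (m + k) + X ^ (m - k)) - C (p 0 : ℂ) * X ^ m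

section lNumerator

variable (m : ℕ) (p : Fin (m + 1) → ℝ)

theorem eval_lNumerator {z : ℂ} (hz : z ≠ 0) : eval z (lNumerator m p) = z ^ m * lEval m p z := by
  have hpow (k : Fin (m + 1)) : z ^ (m - k : ℕ) = z ^ m * z⁻¹ ^ (k : ℕ) := by
    rw [inv_pow, pow_sub₀ _ hz (Nat.le_of_lt_succ k.2)]
  simp only [lNumerator, lEval, eval_sub, eval_finsetSum, eval_mul, eval_C, eval_add, eval_pow,
    eval_X, mul_sub, Finset.mul_sum]
  congr 1
  · exact Finset.sum_congr rfl fun k _ => by rw [hpow, pow_add]; ring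
  · ring

theorem natDegree_lNumerator_le : (lNumerator m p).natDegree ≤ 2 * m := by
  rw [lNumerator, ← max_self (2 * m)]
  refine natDegree_sub_le_of_le (natDegree_sum_le_of_forall_le _ _ fun k _ => ?_) ?_
  · refine (natDegree_C_mul_le _ _).trans ((natDegree_add_le _ _).trans ?_)
    simp only [natDegree_X_pow]
    omega
  · exact (natDegree_C_mul_le _ _).trans (by simp; omega)

theorem map_conj_lNumerator : (lNumerator m p).map (starRingEnd ℂ) = lNumerator m p := by
  simp [lNumerator, Polynomial.map_sum]

theorem reflect_lNumerator : (lNumerator m p).reflect (2 * m) = lNumerator m p := by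
  rw [lNumerator, reflect_sub, reflect_sum]
  congr 1
  · refine Finset.sum_congr rfl fun k _ => ?_
    rw [mul_add, reflect_add, reflect_C_mul_X_pow, reflect_C_mul_X_pow, revAt_le (by omega),
      revAt_le (by omega), add_comm]
    congr 3 <;> omega
  · rw [reflect_C_mul_X_pow, revAt_le (by omega)]
    congr 2
    omega

end lNumerator

open ComplexOrder in
theorem exists_eval_mul_conj_eq_lEval {m : ℕ} {p : Fin (m + 1) → ℝ}
    (hp : ∀ z : ℂ, ‖z‖ = 1 → 0 < lEval m p z) :
    ∃ a : ℂ[X], a.natDegree ≤ m ∧ (∀ z : ℂ, ‖z‖ ≤ 1 → eval z a ≠ 0) ∧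
      ∀ z : ℂ, ‖z‖ = 1 → lEval m p z = eval z a * conj (eval z a) := by
  have hz0 {z : ℂ} (hz : ‖z‖ = 1) : z ≠ 0 := norm_ne_zero_iff.1 (by simp [hz])
  obtain ⟨a, hdeg, hdisk, hnorm⟩ := Complex.exists_natDegree_le_norm_eval_eq_sq
    (natDegree_lNumerator_le m p) (map_conj_lNumerator m p) (reflect_lNumerator m p)
    fun z hz => by
      rw [eval_lNumerator m p (hz0 hz)]
      exact mul_ne_zero (pow_ne_zero _ (hz0 hz)) (hp z hz).ne'
  refine ⟨a, hdeg, hdisk, fun z hz => ?_⟩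
  have := hnorm z hz
  rw [eval_lNumerator m p (hz0 hz), norm_mul, norm_pow, hz, one_pow, one_mul] at this
  rw [Complex.mul_conj', ← Complex.ofReal_pow, ← this, ← Complex.eq_coe_norm_of_nonneg (hp z hz).le]

open ComplexOrder in
/-- Rational spectral factorization of a positive rational trigonometric density:
if `P` and `Q` are symmetric Laurent polynomials of degree at most `m`, strictly positive
on the unit circle, then `P/Q = |a|²/|b|²` on the circle for polynomials `a`, `b` of degree
at most `m` that do not vanish on the closed unit disk. -/
theorem stmt_17 (m : ℕ) (p q : Fin (m + 1) → ℝ)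
    (hp : ∀ z : ℂ, ‖z‖ = 1 → 0 < lEval m p z)
    (hq : ∀ z : ℂ, ‖z‖ = 1 → 0 < lEval m q z) :
    ∃ a b : Polynomial ℂ, a.natDegree ≤ m ∧ b.natDegree ≤ m ∧
      (∀ z : ℂ, ‖z‖ ≤ 1 → Polynomial.eval z a ≠ 0) ∧
      (∀ z : ℂ, ‖z‖ ≤ 1 → Polynomial.eval z b ≠ 0) ∧
      ∀ z : ℂ, ‖z‖ = 1 →
        lEval m p z / lEval m q z =
          (Polynomial.eval z a * (starRingEnd ℂ) (Polynomial.eval z a)) /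
            (Polynomial.eval z b * (starRingEnd ℂ) (Polynomial.eval z b)) := by
  obtain ⟨a, ha_deg, ha_disk, ha_eq⟩ := exists_eval_mul_conj_eq_lEval hp
  obtain ⟨b, hb_deg, hb_disk, hb_eq⟩ := exists_eval_mul_conj_eq_lEval hq
  exact ⟨a, b, ha_deg, hb_deg, ha_disk, hb_disk, fun z hz => by rw [ha_eq z hz, hb_eq z hz]⟩
end
end
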